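/- arXiv:1710.04701 — 10 statements merged into one kernel-verified Lean document; each statement's English description precedes it below -/
import Mathlib

section
/- Let τ ≥ 0 and let S_n, S_a, I, R : [0,∞) → ℝ and M : [−τ,∞) → ℝ be continuous functions, differentiable on (0,∞), satisfying for all t > 0 the equations of system (2): S_n' = (b − v_i)N − βIS_n/N − ηM(t−τ)S_n + λS_a + δqR − bS_n; S_a' = −σ_sβIS_a/N + ηM(t−τ)S_n − (λ + v_s + b)S_a + δpR; I' = βIS_n/N + σ_sβIS_a/N − (r + b)I; R' = rI + v_iN + v_sS_a − (δ + b)R; M' = ω_o + α_oI + αS_a/N − λ_oM. Assume S_n(0) ≥ 0, S_a(0) ≥ 0, I(0) > 0, R(0) ≥ 0, and M(s) ≥ 0 for all s ∈ [−τ, 0]. Then for all t ≥ 0 one has S_n(t) ≥ 0, S_a(t) ≥ 0, I(t) > 0, R(t) ≥ 0 and M(t) ≥ 0. -/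
open Set Filter Topology

set_option maxHeartbeats 1000000

private lemma left_deriv_nonpos {f : ℝ → ℝ} {d a : ℝ} (hd : HasDerivAt f d a)
    (h0 : 0 < a) (hmin : ∀ s, 0 ≤ s → s < a → f a ≤ f s) : d ≤ 0 := by
  have hs : Tendsto (slope f a) (𝓝[<] a) (𝓝 d) :=
    (hasDerivAt_iff_tendsto_slope.mp hd).mono_left
      (nhdsWithin_mono _ (fun x hx => ne_of_lt hx))
  refine le_of_tendsto hs ?_
  filter_upwards [Ioo_mem_nhdsLT_of_mem (⟨h0, le_refl a⟩ : a ∈ Ioc 0 a)] with s hsm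
  have h1 : f a ≤ f s := hmin s hsm.1.le hsm.2
  have h2 : s - a < 0 := by linarith [hsm.2]
  rw [slope_def_field]
  exact div_nonpos_of_nonneg_of_nonpos (by linarith) h2.le

private lemma prod_lb {x y a B : ℝ} (ha : 0 ≤ a) (hB : 0 ≤ B) (hx : -a ≤ x) (hy : -a ≤ y)
    (hxB : x ≤ B) (hyB : y ≤ B) : -(a*B) ≤ x * y := by
  rcases le_or_gt 0 x with h|h
  · nlinarith
  · rcases le_or_gt 0 y with h2|h2 <;> nlinarith

private lemma left_nonneg_limit {v : ℝ → ℝ} {t0 : ℝ} (ht0 : 0 < t0)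
    (hc : ContinuousWithinAt v (Ici 0) t0)
    (h : ∀ s, 0 ≤ s → s < t0 → 0 ≤ v s) : 0 ≤ v t0 := by
  have h2 : 𝓝[Ioo 0 t0] t0 ≤ 𝓝[Ici 0] t0 := nhdsWithin_mono _ (fun x hx => le_of_lt hx.1)
  have h3 : (𝓝[Ioo 0 t0] t0).NeBot := right_nhdsWithin_Ioo_neBot ht0
  refine ge_of_tendsto (hc.tendsto.mono_left h2) ?_
  filter_upwards [self_mem_nhdsWithin] with s hs
  exact h s hs.1.le hs.2

private lemma nonneg_of_eps {x c : ℝ} (hc : 0 < c) (h : ∀ ε, 0 < ε → 0 < x + ε * c) :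
    0 ≤ x := by
  by_contra hx
  push_neg at hx
  have h2 := h (-x / (2 * c)) (div_pos (by linarith) (by linarith))
  have h3 : -x / (2 * c) * c = -x / 2 := by field_simp
  rw [h3] at h2
  linarith

/-- Positivity of solutions of the vaccination-awareness model (2)
(Theorem 1 of the paper, positivity part). -/
theorem positivity_of_solutions
    (b beta r eta lam lamo alpha alphao omegao delta vs N sigmas p q vi tau : ℝ)
    (hb : 0 < b) (hbeta : 0 < beta) (hr : 0 < r) (heta : 0 < eta)
    (hlam : 0 < lam) (hlamo : 0 < lamo) (halpha : 0 < alpha)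
    (halphao : 0 < alphao) (homegao : 0 < omegao) (hdelta : 0 < delta)
    (hvs : 0 < vs) (hN : 0 < N)
    (hsigmas0 : 0 < sigmas) (hsigmas1 : sigmas < 1)
    (hp0 : 0 ≤ p) (hp1 : p ≤ 1) (hq : q = 1 - p)
    (hvi0 : 0 < vi) (hvib : vi < b) (htau : 0 ≤ tau)
    (Sn Sa I R M : ℝ → ℝ)
    (hSnC : ContinuousOn Sn (Ici 0)) (hSaC : ContinuousOn Sa (Ici 0))
    (hIC : ContinuousOn I (Ici 0)) (hRC : ContinuousOn R (Ici 0))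
    (hMC : ContinuousOn M (Ici (-tau)))
    (hSn' : ∀ t > (0 : ℝ), HasDerivAt Sn
      ((b - vi) * N - beta * I t * Sn t / N - eta * M (t - tau) * Sn t
        + lam * Sa t + delta * q * R t - b * Sn t) t)
    (hSa' : ∀ t > (0 : ℝ), HasDerivAt Sa
      (-(sigmas * beta * I t * Sa t / N) + eta * M (t - tau) * Sn t
        - (lam + vs + b) * Sa t + delta * p * R t) t)
    (hI' : ∀ t > (0 : ℝ), HasDerivAt I
      (beta * I t * Sn t / N + sigmas * beta * I t * Sa t / N - (r + b) * I t) t)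
    (hR' : ∀ t > (0 : ℝ), HasDerivAt R
      (r * I t + vi * N + vs * Sa t - (delta + b) * R t) t)
    (hM' : ∀ t > (0 : ℝ), HasDerivAt M
      (omegao + alphao * I t + alpha * Sa t / N - lamo * M t) t)
    (hSn0 : 0 ≤ Sn 0) (hSa0 : 0 ≤ Sa 0) (hI0 : 0 < I 0) (hR0 : 0 ≤ R 0)
    (hM0 : ∀ s, -tau ≤ s → s ≤ 0 → 0 ≤ M s) :
    ∀ t ≥ (0 : ℝ), 0 ≤ Sn t ∧ 0 ≤ Sa t ∧ 0 < I t ∧ 0 ≤ R t ∧ 0 ≤ M t := by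
  intro T hT
  have hTmem : T ∈ Icc (0:ℝ) T := ⟨hT, le_refl T⟩
  have hsub1 : Icc (0:ℝ) T ⊆ Ici 0 := fun x hx => hx.1
  have hq0 : 0 ≤ q := by rw [hq]; linarith
  have hq1 : q ≤ 1 := by rw [hq]; linarith
  -- bounds on the compact time interval
  obtain ⟨B1, hB1⟩ := isCompact_Icc.exists_bound_of_continuousOn (hSnC.mono hsub1)
  obtain ⟨B2, hB2⟩ := isCompact_Icc.exists_bound_of_continuousOn (hSaC.mono hsub1)
  obtain ⟨B3, hB3⟩ :=
    (isCompact_Icc (a := -tau) (b := T)).exists_bound_of_continuousOn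
      (hMC.mono Icc_subset_Ici_self)
  set B := max 1 (max B1 (max B2 B3)) with hBdef
  have hBge1 : (1:ℝ) ≤ B := le_max_left _ _
  have hB0 : (0:ℝ) ≤ B := by linarith
  have hSnB : ∀ s ∈ Icc (0:ℝ) T, -B ≤ Sn s ∧ Sn s ≤ B := by
    intro s hs
    have h := (hB1 s hs).trans
      ((le_max_left _ _).trans (le_max_right 1 (max B1 (max B2 B3))))
    rw [Real.norm_eq_abs] at h
    exact abs_le.mp h
  have hSaB : ∀ s ∈ Icc (0:ℝ) T, -B ≤ Sa s ∧ Sa s ≤ B := by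
    intro s hs
    have h := (hB2 s hs).trans
      (((le_max_left _ _).trans (le_max_right B1 _)).trans
        (le_max_right 1 (max B1 (max B2 B3))))
    rw [Real.norm_eq_abs] at h
    exact abs_le.mp h
  have hMB : ∀ s ∈ Icc (-tau) T, -B ≤ M s ∧ M s ≤ B := by
    intro s hs
    have h := (hB3 s hs).trans
      (((le_max_right _ _).trans (le_max_right B1 _)).trans
        (le_max_right 1 (max B1 (max B2 B3))))
    rw [Real.norm_eq_abs] at h
    exact abs_le.mp h
  -- Step 1 : positivity of I on [0, T]
  have hIpos : ∀ s ∈ Icc (0:ℝ) T, 0 < I s := by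
    by_contra hcon
    push_neg at hcon
    obtain ⟨s1, hs1mem, hs1⟩ := hcon
    set K := beta * B / N + sigmas * beta * B / N + (r + b) with hK
    set Bad := Icc (0:ℝ) T ∩ I ⁻¹' Iic 0 with hBad
    have hBadne : Bad.Nonempty := ⟨s1, hs1mem, hs1⟩
    have hBadcl : IsClosed Bad :=
      (hIC.mono hsub1).preimage_isClosed_of_isClosed isClosed_Icc isClosed_Iic
    have hBadbdd : BddBelow Bad := ⟨0, fun x hx => hx.1.1⟩
    set t0 := sInf Bad with ht0def
    have ht0mem : t0 ∈ Bad := hBadcl.csInf_mem hBadne hBadbdd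
    have ht0Icc : t0 ∈ Icc (0:ℝ) T := ht0mem.1
    have ht0I : I t0 ≤ 0 := ht0mem.2
    have ht0pos : 0 < t0 := by
      rcases lt_or_eq_of_le ht0Icc.1 with h|h
      · exact h
      · exfalso; rw [← h] at ht0I; linarith
    have hbefore : ∀ s, 0 ≤ s → s < t0 → 0 < I s := by
      intro s h1 h2
      by_contra h3
      push_neg at h3
      exact absurd (csInf_le hBadbdd ⟨⟨h1, h2.le.trans ht0Icc.2⟩, h3⟩) (not_le.mpr h2)
    have hmono : MonotoneOn (fun s => Real.exp (K * s) * I s) (Icc 0 t0) := by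
      apply monotoneOn_of_deriv_nonneg (convex_Icc _ _)
      · apply ContinuousOn.mul
        · exact (Real.continuous_exp.comp (continuous_const.mul continuous_id)).continuousOn
        · exact hIC.mono (fun x hx => hx.1)
      · intro x hx
        rw [interior_Icc] at hx
        have hexp : HasDerivAt (fun s : ℝ => Real.exp (K * s)) (Real.exp (K * x) * K) x := by
          have h := ((hasDerivAt_id x).const_mul K).exp
          simp only [id_eq, mul_one] at h
          exact h
        exact (hexp.mul (hI' x hx.1)).differentiableAt.differentiableWithinAt
      · intro x hx
        rw [interior_Icc] at hx
        have hexp : HasDerivAt (fun s : ℝ => Real.exp (K * s)) (Real.exp (K * x) * K) x := by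
          have h := ((hasDerivAt_id x).const_mul K).exp
          simp only [id_eq, mul_one] at h
          exact h
        have hd : HasDerivAt (fun s => Real.exp (K * s) * I s) _ x := hexp.mul (hI' x hx.1)
        rw [hd.deriv]
        have hIx : 0 < I x := hbefore x hx.1.le hx.2
        have hSnx := hSnB x ⟨hx.1.le, hx.2.le.trans ht0Icc.2⟩
        have hSax := hSaB x ⟨hx.1.le, hx.2.le.trans ht0Icc.2⟩
        have hex : (0:ℝ) < Real.exp (K * x) := Real.exp_pos _
        have e1 : 0 ≤ beta * (Sn x + B) / N :=
          div_nonneg (mul_nonneg hbeta.le (by linarith [hSnx.1])) hN.le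
        have e2 : 0 ≤ sigmas * beta * (Sa x + B) / N :=
          div_nonneg (mul_nonneg (mul_nonneg hsigmas0.le hbeta.le) (by linarith [hSax.1])) hN.le
        have key0 : 0 ≤ K + (beta * Sn x / N + sigmas * beta * Sa x / N - (r + b)) := by
          have heq : K + (beta * Sn x / N + sigmas * beta * Sa x / N - (r + b))
              = beta * (Sn x + B) / N + sigmas * beta * (Sa x + B) / N := by
            rw [hK]; ring
          rw [heq]; exact add_nonneg e1 e2
        have hprod : 0 ≤ Real.exp (K * x) * (I x *
            (K + (beta * Sn x / N + sigmas * beta * Sa x / N - (r + b)))) :=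
          mul_nonneg hex.le (mul_nonneg hIx.le key0)
        have hring : Real.exp (K * x) * K * I x +
            Real.exp (K * x) * (beta * I x * Sn x / N + sigmas * beta * I x * Sa x / N
              - (r + b) * I x)
            = Real.exp (K * x) * (I x *
              (K + (beta * Sn x / N + sigmas * beta * Sa x / N - (r + b)))) := by ring
        rw [hring]
        exact hprod
    have hstep := hmono (⟨le_refl (0:ℝ), ht0pos.le⟩ : (0:ℝ) ∈ Icc (0:ℝ) t0)
      (⟨ht0pos.le, le_refl t0⟩ : t0 ∈ Icc (0:ℝ) t0) ht0pos.le
    simp only [mul_zero, Real.exp_zero, one_mul] at hstep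
    have : Real.exp (K * t0) * I t0 ≤ 0 :=
      mul_nonpos_of_nonneg_of_nonpos (Real.exp_pos _).le ht0I
    linarith
  -- Step 2 : the ε-barrier argument for the other four components
  set Cc := eta * B + lam + delta + vs + alpha / N + 1 with hCdef
  have hαN : 0 < alpha / N := div_pos halpha hN
  have hC0 : 0 < Cc := by
    rw [hCdef]
    have h1 : 0 < eta * B := mul_pos heta (by linarith)
    linarith
  have key : ∀ ε, 0 < ε → ∀ s, s ∈ Icc (0:ℝ) T →
      0 < Sn s + ε * Real.exp (Cc * s) ∧ 0 < Sa s + ε * Real.exp (Cc * s) ∧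
      0 < R s + ε * Real.exp (Cc * s) ∧ 0 < M s + ε * Real.exp (Cc * s) := by
    intro ε hε
    set u : ℝ → ℝ := fun s => min
      (min (Sn s + ε * Real.exp (Cc * s)) (Sa s + ε * Real.exp (Cc * s)))
      (min (R s + ε * Real.exp (Cc * s)) (M s + ε * Real.exp (Cc * s))) with hu
    suffices hsuff : ∀ s ∈ Icc (0:ℝ) T, 0 < u s by
      intro s hs
      have h := hsuff s hs
      simp only [hu, lt_min_iff] at h
      exact ⟨h.1.1, h.1.2, h.2.1, h.2.2⟩
    by_contra hcon
    push_neg at hcon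
    obtain ⟨s1, hs1mem, hs1⟩ := hcon
    have hEcont : Continuous fun s : ℝ => ε * Real.exp (Cc * s) :=
      continuous_const.mul (Real.continuous_exp.comp (continuous_const.mul continuous_id))
    have hMC' : ContinuousOn M (Ici (0:ℝ)) :=
      hMC.mono (fun x hx => le_trans (by linarith : -tau ≤ 0) hx)
    have hucont : ContinuousOn u (Icc (0:ℝ) T) := by
      rw [hu]
      intro x hx
      exact (((hSnC.mono hsub1) x hx).add hEcont.continuousWithinAt).min
          (((hSaC.mono hsub1) x hx).add hEcont.continuousWithinAt) |>.min
        ((((hRC.mono hsub1) x hx).add hEcont.continuousWithinAt).min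
          (((hMC'.mono hsub1) x hx).add hEcont.continuousWithinAt))
    set Bad := Icc (0:ℝ) T ∩ u ⁻¹' Iic 0 with hBad
    have hBadne : Bad.Nonempty := ⟨s1, hs1mem, hs1⟩
    have hBadcl : IsClosed Bad :=
      hucont.preimage_isClosed_of_isClosed isClosed_Icc isClosed_Iic
    have hBadbdd : BddBelow Bad := ⟨0, fun x hx => hx.1.1⟩
    set t0 := sInf Bad with ht0def
    have ht0mem : t0 ∈ Bad := hBadcl.csInf_mem hBadne hBadbdd
    have ht0Icc : t0 ∈ Icc (0:ℝ) T := ht0mem.1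
    have ht0u : u t0 ≤ 0 := ht0mem.2
    have hu0 : 0 < u 0 := by
      have hM00 : 0 ≤ M 0 := hM0 0 (by linarith) (le_refl 0)
      simp only [hu, lt_min_iff, mul_zero, Real.exp_zero, mul_one]
      exact ⟨⟨by linarith, by linarith⟩, by linarith, by linarith⟩
    have ht0pos : 0 < t0 := by
      rcases lt_or_eq_of_le ht0Icc.1 with h|h
      · exact h
      · exfalso; rw [← h] at ht0u; linarith
    have hbefore : ∀ s, 0 ≤ s → s < t0 → 0 < u s := by
      intro s h1 h2
      by_contra h3
      push_neg at h3
      exact absurd (csInf_le hBadbdd ⟨⟨h1, h2.le.trans ht0Icc.2⟩, h3⟩) (not_le.mpr h2)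
    have hlow : ∀ s, 0 ≤ s → s ≤ t0 →
        0 ≤ Sn s + ε * Real.exp (Cc * s) ∧ 0 ≤ Sa s + ε * Real.exp (Cc * s) ∧
        0 ≤ R s + ε * Real.exp (Cc * s) ∧ 0 ≤ M s + ε * Real.exp (Cc * s) := by
      intro s h1 h2
      rcases lt_or_eq_of_le h2 with h3|h3
      · have h := hbefore s h1 h3
        simp only [hu, lt_min_iff] at h
        exact ⟨h.1.1.le, h.1.2.le, h.2.1.le, h.2.2.le⟩
      · rw [h3]
        have hlt : ∀ s', 0 ≤ s' → s' < t0 → 0 < u s' := hbefore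
        refine ⟨?_, ?_, ?_, ?_⟩
        · refine left_nonneg_limit (v := fun s => Sn s + ε * Real.exp (Cc * s)) ht0pos
            ((hSnC t0 ht0Icc.1).add hEcont.continuousWithinAt) (fun s' h1' h2' => ?_)
          have h := hlt s' h1' h2'
          simp only [hu, lt_min_iff] at h
          exact h.1.1.le
        · refine left_nonneg_limit (v := fun s => Sa s + ε * Real.exp (Cc * s)) ht0pos
            ((hSaC t0 ht0Icc.1).add hEcont.continuousWithinAt) (fun s' h1' h2' => ?_)
          have h := hlt s' h1' h2'
          simp only [hu, lt_min_iff] at h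
          exact h.1.2.le
        · refine left_nonneg_limit (v := fun s => R s + ε * Real.exp (Cc * s)) ht0pos
            ((hRC t0 ht0Icc.1).add hEcont.continuousWithinAt) (fun s' h1' h2' => ?_)
          have h := hlt s' h1' h2'
          simp only [hu, lt_min_iff] at h
          exact h.2.1.le
        · refine left_nonneg_limit (v := fun s => M s + ε * Real.exp (Cc * s)) ht0pos
            ((hMC' t0 ht0Icc.1).add hEcont.continuousWithinAt) (fun s' h1' h2' => ?_)
          have h := hlt s' h1' h2'
          simp only [hu, lt_min_iff] at h
          exact h.2.2.le
    have hlowt0 := hlow t0 ht0Icc.1 (le_refl t0)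
    have hexpt0 : (0:ℝ) < Real.exp (Cc * t0) := Real.exp_pos _
    have he : 0 < ε * Real.exp (Cc * t0) := mul_pos hε hexpt0
    have hIt0 : 0 < I t0 := hIpos t0 ht0Icc
    have hMτmem : t0 - tau ∈ Icc (-tau) T := ⟨by linarith [ht0Icc.1], by linarith [ht0Icc.2]⟩
    have hMτB := hMB (t0 - tau) hMτmem
    have hMτlow : -(ε * Real.exp (Cc * t0)) ≤ M (t0 - tau) := by
      rcases le_or_gt 0 (t0 - tau) with h|h
      · have h4 := (hlow (t0 - tau) h (by linarith)).2.2.2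
        have h5 : Real.exp (Cc * (t0 - tau)) ≤ Real.exp (Cc * t0) :=
          Real.exp_le_exp.mpr (by nlinarith [mul_nonneg hC0.le htau])
        nlinarith [mul_le_mul_of_nonneg_left h5 hε.le]
      · have h6 := hM0 (t0 - tau) (by linarith) h.le
        nlinarith
    have hE' : HasDerivAt (fun s : ℝ => ε * Real.exp (Cc * s))
        (ε * Real.exp (Cc * t0) * Cc) t0 := by
      have h := (((hasDerivAt_id t0).const_mul Cc).exp.const_mul ε)
      simp only [id_eq, mul_one] at h
      have heq : ε * Real.exp (Cc * t0) * Cc = ε * (Real.exp (Cc * t0) * Cc) := by ring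
      rw [heq]
      exact h
    have hSnub := (hSnB t0 ht0Icc).2
    have hCe : ε * Real.exp (Cc * t0) * Cc
        = ε * Real.exp (Cc * t0) * eta * B + ε * Real.exp (Cc * t0) * lam
          + ε * Real.exp (Cc * t0) * delta + ε * Real.exp (Cc * t0) * vs
          + ε * Real.exp (Cc * t0) * (alpha / N) + ε * Real.exp (Cc * t0) := by
      rw [hCdef]; ring
    simp only [hu, min_le_iff] at ht0u
    rcases ht0u with (hbind|hbind)|(hbind|hbind)
    · -- Sn binds
      have hbe : Sn t0 = -(ε * Real.exp (Cc * t0)) := by linarith [hlowt0.1]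
      have hd := (hSn' t0 ht0pos).add hE'
      have hnonpos := left_deriv_nonpos hd ht0pos (fun s h1 h2 => by
        have h3 := hlow s h1 h2.le
        show Sn t0 + ε * Real.exp (Cc * t0) ≤ Sn s + ε * Real.exp (Cc * s)
        have := h3.1
        linarith [hlowt0.1, hbe])
      have e1 : 0 ≤ beta * I t0 * (ε * Real.exp (Cc * t0)) / N :=
        div_nonneg (mul_nonneg (mul_nonneg hbeta.le hIt0.le) he.le) hN.le
      have heq1 : beta * I t0 * Sn t0 / N
          = -(beta * I t0 * (ε * Real.exp (Cc * t0)) / N) := by rw [hbe]; ring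
      have e2 : eta * (-B) * (ε * Real.exp (Cc * t0))
          ≤ eta * M (t0 - tau) * (ε * Real.exp (Cc * t0)) :=
        mul_le_mul_of_nonneg_right (mul_le_mul_of_nonneg_left hMτB.1 heta.le) he.le
      have e3 : lam * -(ε * Real.exp (Cc * t0)) ≤ lam * Sa t0 :=
        mul_le_mul_of_nonneg_left (by linarith [hlowt0.2.1]) hlam.le
      have e4 : delta * q * -(ε * Real.exp (Cc * t0)) ≤ delta * q * R t0 :=
        mul_le_mul_of_nonneg_left (by linarith [hlowt0.2.2.1])
          (mul_nonneg hdelta.le hq0)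
      have hbviN : 0 < (b - vi) * N := mul_pos (by linarith) hN
      have e5 : 0 ≤ delta * (1 - q) * (ε * Real.exp (Cc * t0)) :=
        mul_nonneg (mul_nonneg hdelta.le (by linarith)) he.le
      have e6 : 0 ≤ (ε * Real.exp (Cc * t0)) * (alpha / N) := mul_nonneg he.le hαN.le
      have e7 : 0 ≤ vs * (ε * Real.exp (Cc * t0)) := mul_nonneg hvs.le he.le
      have e8 : 0 ≤ b * (ε * Real.exp (Cc * t0)) := mul_nonneg hb.le he.le
      rw [hCe] at hnonpos
      rw [heq1, hbe] at hnonpos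
      linarith [hnonpos, e1, e2, e3, e4, e5, e6, e7, e8, hbviN, he]
    · -- Sa binds
      have hbe : Sa t0 = -(ε * Real.exp (Cc * t0)) := by linarith [hlowt0.2.1]
      have hd := (hSa' t0 ht0pos).add hE'
      have hnonpos := left_deriv_nonpos hd ht0pos (fun s h1 h2 => by
        have h3 := hlow s h1 h2.le
        show Sa t0 + ε * Real.exp (Cc * t0) ≤ Sa s + ε * Real.exp (Cc * s)
        have := h3.2.1
        linarith [hlowt0.2.1, hbe])
      have e1 : 0 ≤ sigmas * beta * I t0 * (ε * Real.exp (Cc * t0)) / N :=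
        div_nonneg (mul_nonneg (mul_nonneg (mul_nonneg hsigmas0.le hbeta.le) hIt0.le) he.le)
          hN.le
      have heq1 : sigmas * beta * I t0 * Sa t0 / N
          = -(sigmas * beta * I t0 * (ε * Real.exp (Cc * t0)) / N) := by rw [hbe]; ring
      have e2 : -(ε * Real.exp (Cc * t0) * B) ≤ M (t0 - tau) * Sn t0 :=
        prod_lb he.le hB0 hMτlow (by linarith [hlowt0.1]) hMτB.2 hSnub
      have e2' : eta * -(ε * Real.exp (Cc * t0) * B) ≤ eta * (M (t0 - tau) * Sn t0) :=
        mul_le_mul_of_nonneg_left e2 heta.le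
      have e4 : delta * p * -(ε * Real.exp (Cc * t0)) ≤ delta * p * R t0 :=
        mul_le_mul_of_nonneg_left (by linarith [hlowt0.2.2.1])
          (mul_nonneg hdelta.le hp0)
      have e5 : 0 ≤ delta * (1 - p) * (ε * Real.exp (Cc * t0)) :=
        mul_nonneg (mul_nonneg hdelta.le (by linarith)) he.le
      have e6 : 0 ≤ (ε * Real.exp (Cc * t0)) * (alpha / N) := mul_nonneg he.le hαN.le
      have e7 : 0 ≤ (lam + vs + b) * (ε * Real.exp (Cc * t0)) :=
        mul_nonneg (by linarith) he.le
      have e8 : 0 ≤ lam * (ε * Real.exp (Cc * t0)) := mul_nonneg hlam.le he.le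
      have e9 : 0 ≤ vs * (ε * Real.exp (Cc * t0)) := mul_nonneg hvs.le he.le
      rw [hCe] at hnonpos
      rw [heq1, hbe] at hnonpos
      linarith [hnonpos, e1, e2', e4, e5, e6, e7, e8, e9, he]
    · -- R binds
      have hbe : R t0 = -(ε * Real.exp (Cc * t0)) := by linarith [hlowt0.2.2.1]
      have hd := (hR' t0 ht0pos).add hE'
      have hnonpos := left_deriv_nonpos hd ht0pos (fun s h1 h2 => by
        have h3 := hlow s h1 h2.le
        show R t0 + ε * Real.exp (Cc * t0) ≤ R s + ε * Real.exp (Cc * s)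
        have := h3.2.2.1
        linarith [hlowt0.2.2.1, hbe])
      have e1 : 0 < r * I t0 := mul_pos hr hIt0
      have e2 : 0 < vi * N := mul_pos hvi0 hN
      have e3 : vs * -(ε * Real.exp (Cc * t0)) ≤ vs * Sa t0 :=
        mul_le_mul_of_nonneg_left (by linarith [hlowt0.2.1]) hvs.le
      have e4 : 0 ≤ (delta + b) * (ε * Real.exp (Cc * t0)) :=
        mul_nonneg (by linarith) he.le
      have e5 : 0 ≤ (ε * Real.exp (Cc * t0)) * (alpha / N) := mul_nonneg he.le hαN.le
      have e6 : 0 ≤ eta * B * (ε * Real.exp (Cc * t0)) :=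
        mul_nonneg (mul_nonneg heta.le hB0) he.le
      have e7 : 0 ≤ lam * (ε * Real.exp (Cc * t0)) := mul_nonneg hlam.le he.le
      have e8 : 0 ≤ delta * (ε * Real.exp (Cc * t0)) := mul_nonneg hdelta.le he.le
      rw [hCe] at hnonpos
      rw [hbe] at hnonpos
      linarith [hnonpos, e1, e2, e3, e4, e5, e6, e7, e8, he]
    · -- M binds
      have hbe : M t0 = -(ε * Real.exp (Cc * t0)) := by linarith [hlowt0.2.2.2]
      have hd := (hM' t0 ht0pos).add hE'
      have hnonpos := left_deriv_nonpos hd ht0pos (fun s h1 h2 => by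
        have h3 := hlow s h1 h2.le
        show M t0 + ε * Real.exp (Cc * t0) ≤ M s + ε * Real.exp (Cc * s)
        have := h3.2.2.2
        linarith [hlowt0.2.2.2, hbe])
      have e1 : 0 < alphao * I t0 := mul_pos halphao hIt0
      have e2 : alpha * -(ε * Real.exp (Cc * t0)) / N ≤ alpha * Sa t0 / N :=
        (div_le_div_iff_of_pos_right hN).mpr
          (mul_le_mul_of_nonneg_left (by linarith [hlowt0.2.1]) halpha.le)
      have e3 : alpha * -(ε * Real.exp (Cc * t0)) / N
          = -((ε * Real.exp (Cc * t0)) * (alpha / N)) := by ring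
      have e4 : 0 ≤ lamo * (ε * Real.exp (Cc * t0)) := mul_nonneg hlamo.le he.le
      have e5 : 0 ≤ eta * B * (ε * Real.exp (Cc * t0)) :=
        mul_nonneg (mul_nonneg heta.le hB0) he.le
      have e6 : 0 ≤ lam * (ε * Real.exp (Cc * t0)) := mul_nonneg hlam.le he.le
      have e7 : 0 ≤ delta * (ε * Real.exp (Cc * t0)) := mul_nonneg hdelta.le he.le
      have e8 : 0 ≤ vs * (ε * Real.exp (Cc * t0)) := mul_nonneg hvs.le he.le
      rw [hCe] at hnonpos
      rw [hbe] at hnonpos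
      rw [e3] at e2
      linarith [hnonpos, e1, e2, e4, e5, e6, e7, e8, he, homegao]
  -- conclusion
  have hconj := fun ε hε => key ε hε T hTmem
  refine ⟨?_, ?_, hIpos T hTmem, ?_, ?_⟩
  · exact nonneg_of_eps (Real.exp_pos (Cc * T)) (fun ε hε => (hconj ε hε).1)
  · exact nonneg_of_eps (Real.exp_pos (Cc * T)) (fun ε hε => (hconj ε hε).2.1)
  · exact nonneg_of_eps (Real.exp_pos (Cc * T)) (fun ε hε => (hconj ε hε).2.2.1)
  · exact nonneg_of_eps (Real.exp_pos (Cc * T)) (fun ε hε => (hconj ε hε).2.2.2)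
end

section
/- Let τ ≥ 0 and let S_n, S_a, I, R : [0,∞) → ℝ and M : [−τ,∞) → ℝ be continuous functions, differentiable on (0,∞), satisfying for all t > 0 the equations of system (2): S_n' = (b − v_i)N − βIS_n/N − ηM(t−τ)S_n + λS_a + δqR − bS_n; S_a' = −σ_sβIS_a/N + ηM(t−τ)S_n − (λ + v_s + b)S_a + δpR; I' = βIS_n/N + σ_sβIS_a/N − (r + b)I; R' = rI + v_iN + v_sS_a − (δ + b)R; M' = ω_o + α_oI + αS_a/N − λ_oM. Assume S_n(0) ≥ 0, S_a(0) ≥ 0, I(0) > 0, R(0) ≥ 0, M(s) ≥ 0 for all s ∈ [−τ, 0], and S_n(0) + S_a(0) + I(0) + R(0) = N. Then for all t ≥ 0: 0 ≤ S_n(t) ≤ N, 0 ≤ S_a(t) ≤ N, 0 ≤ I(t) ≤ N, 0 ≤ R(t) ≤ N, and 0 ≤ M(t) ≤ M̂, where M̂ = M(0) + (ω_o + α_oN + α)/λ_o. -/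
/-!
Nonnegativity is a first-exit argument. On a compact time interval the solution is bounded, so
whenever one compartment has just reached a level `-E` while all of them (and the delayed `M`)
are still `≥ -E`, the right-hand side of its equation is `≥ -K E`, with `K` independent of `E`.
Perturbing the compartments by `ε e^{(K+1)t}` makes every first zero a point of positive
derivative, which is impossible; letting `ε → 0` gives nonnegativity.
Summing the first four equations gives `(Sn + Sa + I + R)' = b (N - (Sn + Sa + I + R))`, so the
total population stays `N` and bounds each compartment. Finally
`M' ≤ ωₒ + αₒ N + α - λₒ M`, and comparison with this linear equation bounds `M`.
-/

open Set Real

theorem HasDerivAt.nonpos_of_le_left {g : ℝ → ℝ} {g' a b : ℝ} (hab : a < b)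
    (hg : HasDerivAt g g' b) (hmin : ∀ s ∈ Ioo a b, g b ≤ g s) : g' ≤ 0 := by
  refine le_of_tendsto (hasDerivAt_iff_tendsto_slope_left_right.1 hg).1 ?_
  filter_upwards [Ioo_mem_nhdsLT hab] with s hs
  rw [slope_def_field]
  exact div_nonpos_of_nonneg_of_nonpos (sub_nonneg.2 (hmin s hs)) (sub_nonpos.2 hs.2.le)

theorem exists_first_nonpos {ι : Type*} [Finite ι] {g : ι → ℝ → ℝ} {T : ℝ}
    (hg : ∀ i, ContinuousOn (g i) (Icc 0 T)) (h0 : ∀ i, 0 < g i 0)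
    (hbad : ∃ i, ∃ t ∈ Icc 0 T, g i t ≤ 0) :
    ∃ t₀ ∈ Ioc 0 T, ∃ i₀, g i₀ t₀ = 0 ∧ ∀ j, (∀ s ∈ Ico 0 t₀, 0 < g j s) ∧ 0 ≤ g j t₀ := by
  obtain ⟨i, t, ht, hgt⟩ := hbad
  set S := ⋃ i, Icc 0 T ∩ g i ⁻¹' Iic 0
  have hS_closed : IsClosed S := isClosed_iUnion_of_finite fun i =>
    (hg i).preimage_isClosed_of_isClosed isClosed_Icc isClosed_Iic
  have hS_bdd : BddBelow S := ⟨0, fun s hs => by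
    obtain ⟨_, ⟨hs0, _⟩, _⟩ := mem_iUnion.1 hs
    exact hs0⟩
  obtain ⟨i₀, ⟨ht₀0, ht₀T⟩, hgi₀⟩ :=
    mem_iUnion.1 (hS_closed.csInf_mem ⟨t, mem_iUnion.2 ⟨i, ht, hgt⟩⟩ hS_bdd)
  set t₀ := sInf S
  have hbefore : ∀ j, ∀ s ∈ Ico 0 t₀, 0 < g j s := fun j s hs => by
    by_contra! h
    exact (csInf_le hS_bdd (mem_iUnion.2 ⟨j, ⟨hs.1, hs.2.le.trans ht₀T⟩, h⟩)).not_gt hs.2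
  have ht₀ : 0 < t₀ := ht₀0.lt_of_ne fun h => (h0 i₀).not_ge (h ▸ hgi₀)
  have hat : ∀ j, 0 ≤ g j t₀ := fun j => by
    have hcont : ContinuousOn (g j) (Icc 0 t₀) := (hg j).mono (Icc_subset_Icc_right ht₀T)
    have hmem : t₀ ∈ closure (Ico 0 t₀) := by rw [closure_Ico ht₀.ne]; exact ⟨ht₀0, le_rfl⟩
    rw [← closure_Ico ht₀.ne] at hcont
    exact ContinuousWithinAt.closure_le hmem continuousWithinAt_const
      ((hcont t₀ hmem).mono subset_closure) fun u hu => (hbefore j u hu).le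
  exact ⟨t₀, ⟨ht₀, ht₀T⟩, i₀, le_antisymm hgi₀ (hat i₀), fun j => ⟨hbefore j, hat j⟩⟩

theorem nonneg_of_exit_deriv_ge {ι : Type*} [Fintype ι] {f : ι → ℝ → ℝ} {T : ℝ} {K : ι → ℝ}
    (hK : ∀ i, 0 ≤ K i) (hf : ∀ i, ContinuousOn (f i) (Icc 0 T)) (h0 : ∀ i, 0 ≤ f i 0)
    (hexit : ∀ t ∈ Ioc 0 T, ∀ E > 0, (∀ j, ∀ s ∈ Icc 0 t, -E ≤ f j s) →
      ∀ i, f i t = -E → ∃ d, HasDerivAt (f i) d t ∧ -(K i * E) ≤ d) :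
    ∀ i, ∀ t ∈ Icc 0 T, 0 ≤ f i t := by
  set L := ∑ i, K i + 1
  have hKL : ∀ i, K i + 1 ≤ L := fun i =>
    add_le_add_left (Finset.single_le_sum (fun j _ => hK j) (Finset.mem_univ i)) 1
  have hL : 0 ≤ L := add_nonneg (Finset.sum_nonneg fun j _ => hK j) zero_le_one
  suffices h : ∀ ε > 0, ∀ i, ∀ t ∈ Icc 0 T, 0 < f i t + ε * exp (L * t) by
    intro i t ht
    by_contra! hneg
    have := h (-f i t / exp (L * t)) (div_pos (neg_pos.2 hneg) (exp_pos _)) i t ht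
    rw [div_mul_cancel₀ _ (exp_pos _).ne'] at this
    linarith
  intro ε hε
  by_contra! hbad
  obtain ⟨t₀, ⟨ht₀, ht₀T⟩, i₀, hzero, hpos⟩ := exists_first_nonpos
    (g := fun i s => f i s + ε * exp (L * s)) (fun i => (hf i).add (by fun_prop))
    (fun i => by simpa using add_pos_of_nonneg_of_pos (h0 i) hε) hbad
  set E := ε * exp (L * t₀)
  have hE : 0 < E := by positivity
  have hlow : ∀ j, ∀ s ∈ Icc 0 t₀, -E ≤ f j s := by
    intro j s hs
    have hexp : ε * exp (L * s) ≤ E := by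
      dsimp only [E]
      gcongr
      exact hs.2
    rcases hs.2.lt_or_eq with hlt | rfl
    · linarith [(hpos j).1 s ⟨hs.1, hlt⟩]
    · linarith [(hpos j).2]
  obtain ⟨d, hd, hdK⟩ := hexit t₀ ⟨ht₀, ht₀T⟩ E hE hlow i₀ (by linarith)
  have hgd : HasDerivAt (fun s => f i₀ s + ε * exp (L * s)) (d + ε * (L * exp (L * t₀))) t₀ := by
    have := ((hasDerivAt_id t₀).const_mul L).exp.const_mul ε
    exact hd.add (by simpa [mul_comm] using this)
  have hgd_nonpos := hgd.nonpos_of_le_left ht₀ fun s hs => by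
    linarith [(hpos i₀).1 s ⟨hs.1.le, hs.2⟩]
  nlinarith [mul_le_mul_of_nonneg_right (hKL i₀) hE.le]

theorem le_of_hasDerivAt_le_sub_mul {y y' : ℝ → ℝ} {a c U : ℝ} (hy : ContinuousOn y (Ici 0))
    (hy' : ∀ t > 0, HasDerivAt y (y' t) t) (hle : ∀ t > 0, y' t ≤ a - c * y t)
    (h0 : y 0 ≤ U) (haU : a ≤ c * U) : ∀ t ≥ 0, y t ≤ U := by
  have hanti : AntitoneOn (fun t => (y t - U) * exp (c * t)) (Ici 0) := by
    refine antitoneOn_of_hasDerivWithinAt_nonpos (convex_Ici 0) (by fun_prop)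
      (f' := fun t => (y' t + c * (y t - U)) * exp (c * t)) (fun t ht => ?_) (fun t ht => ?_)
    all_goals rw [interior_Ici] at ht
    · rw [interior_Ici]
      have hexp : HasDerivAt (fun t => exp (c * t)) (exp (c * t) * c) t := by
        simpa using ((hasDerivAt_id t).const_mul c).exp
      exact ((((hy' t ht).sub_const U).mul hexp).congr_deriv (by ring)).hasDerivWithinAt
    · have hneg : y' t + c * (y t - U) ≤ 0 := by linarith [hle t ht]
      exact mul_nonpos_of_nonpos_of_nonneg hneg (exp_pos _).le
  intro t ht
  have hmono : (y t - U) * exp (c * t) ≤ y 0 - U := by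
    simpa using hanti self_mem_Ici ht ht
  have : (y t - U) * exp (c * t) ≤ 0 := hmono.trans (sub_nonpos.2 h0)
  nlinarith [exp_pos (c * t)]

theorem exists_forall_abs_le_of_continuousOn {ι : Type*} [Fintype ι] {f : ι → ℝ → ℝ} {a b : ℝ}
    (hf : ∀ i, ContinuousOn (f i) (Icc a b)) : ∃ B, ∀ i, ∀ s ∈ Icc a b, |f i s| ≤ B := by
  obtain ⟨B, hB⟩ := isCompact_Icc.exists_bound_of_continuousOn (continuousOn_pi.2 hf)
  exact ⟨B, fun i s hs => (norm_le_pi_norm (fun i => f i s) i).trans (hB s hs)⟩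

theorem neg_mul_le_mul_of_mem_Icc {x y B E : ℝ} (hB : 0 ≤ B) (hE : 0 ≤ E)
    (hx : x ∈ Icc (-E) B) (hy : y ∈ Icc (-E) B) : -(B * E) ≤ x * y := by
  obtain ⟨hx₁, hx₂⟩ := hx
  obtain ⟨hy₁, hy₂⟩ := hy
  rcases le_total 0 x with hx₀ | hx₀ <;> rcases le_total 0 y with hy₀ | hy₀ <;> nlinarith

section Model

variable {b beta r eta lam lamo alpha alphao omegao delta vs N sigmas p q vi tau : ℝ}
  {Sn Sa I R M : ℝ → ℝ}

/- Lower bounds for the right-hand sides of (2) at a first exit through `-E`, the hypothesis of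
`nonneg_of_exit_deriv_ge`. -/
theorem rate_Sn_ge (hbeta : 0 ≤ beta) (heta : 0 ≤ eta) (hlam : 0 ≤ lam) (hdelta : 0 ≤ delta)
    (hq : 0 ≤ q) (hb : 0 ≤ b) (hvib : vi ≤ b) (hN : 0 < N) {B E i sa r md : ℝ} (hE : 0 ≤ E)
    (hi : -B ≤ i) (hmd : -B ≤ md) (hsa : -E ≤ sa) (hr : -E ≤ r) :
    -(((beta * N⁻¹ + eta) * B + lam + delta * q) * E) ≤
      (b - vi) * N - beta * i * -E / N - eta * md * -E + lam * sa + delta * q * r - b * -E := by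
  simp only [div_eq_mul_inv]
  linarith [mul_le_mul_of_nonneg_left hi (by positivity : 0 ≤ beta * N⁻¹ * E),
    mul_le_mul_of_nonneg_left hmd (mul_nonneg heta hE), mul_le_mul_of_nonneg_left hsa hlam,
    mul_le_mul_of_nonneg_left hr (mul_nonneg hdelta hq), mul_nonneg (sub_nonneg.2 hvib) hN.le,
    mul_nonneg hb hE]

theorem rate_Sa_ge (hbeta : 0 ≤ beta) (heta : 0 ≤ eta) (hlam : 0 ≤ lam) (hdelta : 0 ≤ delta)
    (hsigmas : 0 ≤ sigmas) (hvs : 0 ≤ vs) (hp : 0 ≤ p) (hb : 0 ≤ b) (hN : 0 < N)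
    {B E i sn r md : ℝ} (hB : 0 ≤ B) (hE : 0 ≤ E) (hi : -B ≤ i) (hsn : sn ∈ Icc (-E) B)
    (hmd : md ∈ Icc (-E) B) (hr : -E ≤ r) :
    -(((sigmas * beta * N⁻¹ + eta) * B + delta * p) * E) ≤
      -(sigmas * beta * i * -E / N) + eta * md * sn - (lam + vs + b) * -E + delta * p * r := by
  simp only [div_eq_mul_inv]
  linarith [mul_le_mul_of_nonneg_left hi (by positivity : 0 ≤ sigmas * beta * N⁻¹ * E),
    mul_le_mul_of_nonneg_left (neg_mul_le_mul_of_mem_Icc hB hE hmd hsn) heta,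
    mul_le_mul_of_nonneg_left hr (mul_nonneg hdelta hp),
    mul_nonneg (by positivity : 0 ≤ lam + vs + b) hE]

theorem rate_I_ge (hbeta : 0 ≤ beta) (hr : 0 ≤ r) (hsigmas : 0 ≤ sigmas) (hb : 0 ≤ b)
    (hN : 0 < N) {B E sn sa : ℝ} (hE : 0 ≤ E) (hsn : sn ≤ B) (hsa : sa ≤ B) :
    -((beta + sigmas * beta) * N⁻¹ * B * E) ≤
      beta * -E * sn / N + sigmas * beta * -E * sa / N - (r + b) * -E := by
  simp only [div_eq_mul_inv]
  linarith [mul_le_mul_of_nonneg_left hsn (by positivity : 0 ≤ beta * N⁻¹ * E),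
    mul_le_mul_of_nonneg_left hsa (by positivity : 0 ≤ sigmas * beta * N⁻¹ * E),
    mul_nonneg (by positivity : 0 ≤ r + b) hE]

theorem rate_R_ge (hr : 0 ≤ r) (hdelta : 0 ≤ delta) (hvs : 0 ≤ vs) (hvi : 0 ≤ vi) (hb : 0 ≤ b)
    (hN : 0 < N) {E i sa : ℝ} (hE : 0 ≤ E) (hi : -E ≤ i) (hsa : -E ≤ sa) :
    -((r + vs) * E) ≤ r * i + vi * N + vs * sa - (delta + b) * -E := by
  linarith [mul_le_mul_of_nonneg_left hi hr, mul_le_mul_of_nonneg_left hsa hvs,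
    mul_nonneg hvi hN.le, mul_nonneg (by positivity : 0 ≤ delta + b) hE]

theorem rate_M_ge (hlamo : 0 ≤ lamo) (halpha : 0 ≤ alpha) (halphao : 0 ≤ alphao)
    (homegao : 0 ≤ omegao) (hN : 0 < N) {E i sa : ℝ} (hE : 0 ≤ E) (hi : -E ≤ i)
    (hsa : -E ≤ sa) :
    -((alphao + alpha * N⁻¹) * E) ≤ omegao + alphao * i + alpha * sa / N - lamo * -E := by
  simp only [div_eq_mul_inv]
  linarith [mul_le_mul_of_nonneg_left hi halphao,
    mul_le_mul_of_nonneg_left hsa (by positivity : 0 ≤ alpha * N⁻¹), mul_nonneg hlamo hE]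

theorem exists_bound_on_Icc (hSnC : ContinuousOn Sn (Ici 0))
    (hSaC : ContinuousOn Sa (Ici 0)) (hIC : ContinuousOn I (Ici 0))
    (hMC : ContinuousOn M (Ici (-tau))) (T : ℝ) :
    ∃ B, ∀ t ∈ Icc 0 T, |Sn t| ≤ B ∧ |Sa t| ≤ B ∧ |I t| ≤ B ∧ |M (t - tau)| ≤ B := by
  have hMτ : ContinuousOn (fun t => M (t - tau)) (Icc 0 T) :=
    hMC.comp (continuousOn_id.sub continuousOn_const) fun t ht => by
      simp only [mem_Ici]; linarith [ht.1]
  obtain ⟨B, hB⟩ := exists_forall_abs_le_of_continuousOn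
    (f := ![Sn, Sa, I, fun t => M (t - tau)]) (a := 0) (b := T) (by
      intro i
      fin_cases i
      exacts [hSnC.mono Icc_subset_Ici_self, hSaC.mono Icc_subset_Ici_self,
        hIC.mono Icc_subset_Ici_self, hMτ])
  exact ⟨B, fun t ht => ⟨hB 0 t ht, hB 1 t ht, hB 2 t ht, hB 3 t ht⟩⟩

theorem compartments_nonneg
    (hbeta : 0 ≤ beta) (hr : 0 ≤ r) (heta : 0 ≤ eta) (hlam : 0 ≤ lam) (hlamo : 0 ≤ lamo)
    (halpha : 0 ≤ alpha) (halphao : 0 ≤ alphao) (homegao : 0 ≤ omegao) (hdelta : 0 ≤ delta)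
    (hvs : 0 ≤ vs) (hN : 0 < N) (hsigmas : 0 ≤ sigmas) (hp : 0 ≤ p) (hq : 0 ≤ q)
    (hvi : 0 ≤ vi) (hvib : vi ≤ b) (htau : 0 ≤ tau)
    (hSnC : ContinuousOn Sn (Ici 0)) (hSaC : ContinuousOn Sa (Ici 0))
    (hIC : ContinuousOn I (Ici 0)) (hRC : ContinuousOn R (Ici 0))
    (hMC : ContinuousOn M (Ici (-tau)))
    (hSn' : ∀ t > (0 : ℝ), HasDerivAt Sn
      ((b - vi) * N - beta * I t * Sn t / N - eta * M (t - tau) * Sn t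
        + lam * Sa t + delta * q * R t - b * Sn t) t)
    (hSa' : ∀ t > (0 : ℝ), HasDerivAt Sa
      (-(sigmas * beta * I t * Sa t / N) + eta * M (t - tau) * Sn t
        - (lam + vs + b) * Sa t + delta * p * R t) t)
    (hI' : ∀ t > (0 : ℝ), HasDerivAt I
      (beta * I t * Sn t / N + sigmas * beta * I t * Sa t / N - (r + b) * I t) t)
    (hR' : ∀ t > (0 : ℝ), HasDerivAt R
      (r * I t + vi * N + vs * Sa t - (delta + b) * R t) t)
    (hM' : ∀ t > (0 : ℝ), HasDerivAt M
      (omegao + alphao * I t + alpha * Sa t / N - lamo * M t) t)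
    (hSn0 : 0 ≤ Sn 0) (hSa0 : 0 ≤ Sa 0) (hI0 : 0 ≤ I 0) (hR0 : 0 ≤ R 0)
    (hM0 : ∀ s, -tau ≤ s → s ≤ 0 → 0 ≤ M s) :
    ∀ t ≥ 0, 0 ≤ Sn t ∧ 0 ≤ Sa t ∧ 0 ≤ I t ∧ 0 ≤ R t ∧ 0 ≤ M t := by
  intro T hT
  have hb : 0 ≤ b := hvi.trans hvib
  obtain ⟨B, hB⟩ := exists_bound_on_Icc hSnC hSaC hIC hMC T
  have hB0 : 0 ≤ B := (abs_nonneg _).trans (hB 0 ⟨le_rfl, hT⟩).1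
  have key := nonneg_of_exit_deriv_ge (f := ![Sn, Sa, I, R, M]) (T := T)
    (K := ![(beta * N⁻¹ + eta) * B + lam + delta * q, (sigmas * beta * N⁻¹ + eta) * B + delta * p,
      (beta + sigmas * beta) * N⁻¹ * B, r + vs, alphao + alpha * N⁻¹])
    (by
      intro i
      fin_cases i <;> simp only [Fin.zero_eta, Fin.mk_one, Fin.reduceFinMk, Matrix.cons_val] <;>
        positivity)
    (by
      intro i
      fin_cases i
      exacts [hSnC.mono Icc_subset_Ici_self, hSaC.mono Icc_subset_Ici_self,
        hIC.mono Icc_subset_Ici_self, hRC.mono Icc_subset_Ici_self,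
        hMC.mono (Icc_subset_Ici_iff hT |>.2 (neg_nonpos.2 htau))]) (by
      intro i
      fin_cases i
      exacts [hSn0, hSa0, hI0, hR0, hM0 0 (neg_nonpos.2 htau) le_rfl]) ?_
  · have hT' : T ∈ Icc 0 T := ⟨hT, le_rfl⟩
    exact ⟨key 0 T hT', key 1 T hT', key 2 T hT', key 3 T hT', key 4 T hT'⟩
  intro t ht E hE hlow i hi
  obtain ⟨hSnB, hSaB, hIB, hMτB⟩ := hB t ⟨ht.1.le, ht.2⟩
  have htt : t ∈ Icc 0 t := ⟨ht.1.le, le_rfl⟩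
  have hSnE : -E ≤ Sn t := hlow 0 t htt
  have hSaE : -E ≤ Sa t := hlow 1 t htt
  have hIE : -E ≤ I t := hlow 2 t htt
  have hRE : -E ≤ R t := hlow 3 t htt
  have hMτE : -E ≤ M (t - tau) := by
    rcases le_total (t - tau) 0 with h | h
    · linarith [hM0 (t - tau) (by linarith [ht.1]) h]
    · exact hlow 4 (t - tau) ⟨h, by linarith⟩
  fin_cases i <;> simp only [Fin.zero_eta, Fin.mk_one, Fin.reduceFinMk, Matrix.cons_val] at hi ⊢
  · exact ⟨_, hSn' t ht.1, hi ▸ rate_Sn_ge hbeta heta hlam hdelta hq hb hvib hN hE.le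
      (abs_le.1 hIB).1 (abs_le.1 hMτB).1 hSaE hRE⟩
  · exact ⟨_, hSa' t ht.1, hi ▸ rate_Sa_ge hbeta heta hlam hdelta hsigmas hvs hp hb hN hB0 hE.le
      (abs_le.1 hIB).1 ⟨hSnE, (abs_le.1 hSnB).2⟩ ⟨hMτE, (abs_le.1 hMτB).2⟩ hRE⟩
  · exact ⟨_, hI' t ht.1, hi ▸ rate_I_ge hbeta hr hsigmas hb hN hE.le (abs_le.1 hSnB).2
      (abs_le.1 hSaB).2⟩
  · exact ⟨_, hR' t ht.1, hi ▸ rate_R_ge hr hdelta hvs hvi hb hN hE.le hIE hSaE⟩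
  · exact ⟨_, hM' t ht.1, hi ▸ rate_M_ge hlamo halpha halphao homegao hN hE.le hIE hSaE⟩

theorem total_population_eq (hq : q = 1 - p)
    (hSnC : ContinuousOn Sn (Ici 0)) (hSaC : ContinuousOn Sa (Ici 0))
    (hIC : ContinuousOn I (Ici 0)) (hRC : ContinuousOn R (Ici 0))
    (hSn' : ∀ t > (0 : ℝ), HasDerivAt Sn
      ((b - vi) * N - beta * I t * Sn t / N - eta * M (t - tau) * Sn t
        + lam * Sa t + delta * q * R t - b * Sn t) t)
    (hSa' : ∀ t > (0 : ℝ), HasDerivAt Sa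
      (-(sigmas * beta * I t * Sa t / N) + eta * M (t - tau) * Sn t
        - (lam + vs + b) * Sa t + delta * p * R t) t)
    (hI' : ∀ t > (0 : ℝ), HasDerivAt I
      (beta * I t * Sn t / N + sigmas * beta * I t * Sa t / N - (r + b) * I t) t)
    (hR' : ∀ t > (0 : ℝ), HasDerivAt R
      (r * I t + vi * N + vs * Sa t - (delta + b) * R t) t)
    (hsum : Sn 0 + Sa 0 + I 0 + R 0 = N) :
    ∀ t ≥ 0, Sn t + Sa t + I t + R t = N := by
  set P := fun t => Sn t + Sa t + I t + R t
  have hPC : ContinuousOn P (Ici 0) := ((hSnC.add hSaC).add hIC).add hRC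
  have hP' : ∀ t > 0, HasDerivAt P (b * N - b * P t) t := fun t ht =>
    ((((hSn' t ht).add (hSa' t ht)).add (hI' t ht)).add (hR' t ht)).congr_deriv (by
      simp only [P, hq]; ring)
  have hle := le_of_hasDerivAt_le_sub_mul hPC hP' (fun _ _ => le_rfl) hsum.le le_rfl
  have hge := le_of_hasDerivAt_le_sub_mul hPC.neg (fun t ht => (hP' t ht).neg)
    (fun t _ => (by ring : -(b * N - b * P t) = -(b * N) - b * -P t).le) (neg_le_neg hsum.ge)
    (neg_mul_eq_mul_neg b N).le
  exact fun t ht => le_antisymm (hle t ht) (neg_le_neg_iff.1 (hge t ht))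

theorem M_le (hlamo : 0 < lamo) (halpha : 0 ≤ alpha) (halphao : 0 ≤ alphao)
    (homegao : 0 ≤ omegao) (hN : 0 < N) (hMC : ContinuousOn M (Ici 0))
    (hM' : ∀ t > (0 : ℝ), HasDerivAt M
      (omegao + alphao * I t + alpha * Sa t / N - lamo * M t) t)
    (hM0 : 0 ≤ M 0) (hI : ∀ t > 0, I t ≤ N) (hSa : ∀ t > 0, Sa t ≤ N) :
    ∀ t ≥ 0, M t ≤ M 0 + (omegao + alphao * N + alpha) / lamo := by
  refine le_of_hasDerivAt_le_sub_mul (a := omegao + alphao * N + alpha) (c := lamo) hMC hM'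
    (fun t ht => ?_) (le_add_of_nonneg_right (by positivity)) ?_
  · have hIN : alphao * I t ≤ alphao * N := mul_le_mul_of_nonneg_left (hI t ht) halphao
    have hSaN : alpha * Sa t / N ≤ alpha := by
      rw [mul_div_assoc]
      exact mul_le_of_le_one_right halpha ((div_le_one hN).2 (hSa t ht))
    linarith
  · rw [mul_add, mul_div_cancel₀ _ hlamo.ne']
    linarith [mul_nonneg hlamo.le hM0]

end Model

theorem positivity_and_boundedness_of_solutions_general
    (b beta r eta lam lamo alpha alphao omegao delta vs N sigmas p q vi tau : ℝ)
    (hbeta : 0 < beta) (hr : 0 < r) (heta : 0 < eta)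
    (hlam : 0 < lam) (hlamo : 0 < lamo) (halpha : 0 < alpha)
    (halphao : 0 < alphao) (homegao : 0 < omegao) (hdelta : 0 < delta)
    (hvs : 0 < vs) (hN : 0 < N)
    (hsigmas0 : 0 < sigmas)
    (hp0 : 0 ≤ p) (hp1 : p ≤ 1) (hq : q = 1 - p)
    (hvi0 : 0 < vi) (hvib : vi < b) (htau : 0 ≤ tau)
    (Sn Sa I R M : ℝ → ℝ)
    (hSnC : ContinuousOn Sn (Ici 0)) (hSaC : ContinuousOn Sa (Ici 0))
    (hIC : ContinuousOn I (Ici 0)) (hRC : ContinuousOn R (Ici 0))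
    (hMC : ContinuousOn M (Ici (-tau)))
    (hSn' : ∀ t > (0 : ℝ), HasDerivAt Sn
      ((b - vi) * N - beta * I t * Sn t / N - eta * M (t - tau) * Sn t
        + lam * Sa t + delta * q * R t - b * Sn t) t)
    (hSa' : ∀ t > (0 : ℝ), HasDerivAt Sa
      (-(sigmas * beta * I t * Sa t / N) + eta * M (t - tau) * Sn t
        - (lam + vs + b) * Sa t + delta * p * R t) t)
    (hI' : ∀ t > (0 : ℝ), HasDerivAt I
      (beta * I t * Sn t / N + sigmas * beta * I t * Sa t / N - (r + b) * I t) t)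
    (hR' : ∀ t > (0 : ℝ), HasDerivAt R
      (r * I t + vi * N + vs * Sa t - (delta + b) * R t) t)
    (hM' : ∀ t > (0 : ℝ), HasDerivAt M
      (omegao + alphao * I t + alpha * Sa t / N - lamo * M t) t)
    (hSn0 : 0 ≤ Sn 0) (hSa0 : 0 ≤ Sa 0) (hI0 : 0 < I 0) (hR0 : 0 ≤ R 0)
    (hM0 : ∀ s, -tau ≤ s → s ≤ 0 → 0 ≤ M s)
    (hsum : Sn 0 + Sa 0 + I 0 + R 0 = N) :
    ∀ t ≥ (0 : ℝ),
      (0 ≤ Sn t ∧ Sn t ≤ N) ∧ (0 ≤ Sa t ∧ Sa t ≤ N) ∧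
      (0 ≤ I t ∧ I t ≤ N) ∧ (0 ≤ R t ∧ R t ≤ N) ∧
      (0 ≤ M t ∧ M t ≤ M 0 + (omegao + alphao * N + alpha) / lamo) := by
  have hnonneg := compartments_nonneg hbeta.le hr.le heta.le hlam.le hlamo.le halpha.le
    halphao.le homegao.le hdelta.le hvs.le hN hsigmas0.le hp0 (hq ▸ sub_nonneg.2 hp1) hvi0.le
    hvib.le htau hSnC hSaC hIC hRC hMC hSn' hSa' hI' hR' hM' hSn0 hSa0 hI0.le hR0 hM0
  have htotal := total_population_eq hq hSnC hSaC hIC hRC hSn' hSa' hI' hR' hsum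
  have hle_N : ∀ t ≥ 0, Sn t ≤ N ∧ Sa t ≤ N ∧ I t ≤ N ∧ R t ≤ N := fun t ht => by
    obtain ⟨hSn, hSa, hI, hR, -⟩ := hnonneg t ht
    have := htotal t ht
    exact ⟨by linarith, by linarith, by linarith, by linarith⟩
  have hM_le := M_le hlamo halpha.le halphao.le homegao.le hN
    (hMC.mono (Ici_subset_Ici.2 (neg_nonpos.2 htau))) hM' (hM0 0 (neg_nonpos.2 htau) le_rfl)
    (fun t ht => (hle_N t ht.le).2.2.1) (fun t ht => (hle_N t ht.le).2.1)
  intro t ht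
  obtain ⟨hSn, hSa, hI, hR, hM⟩ := hnonneg t ht
  obtain ⟨hSnN, hSaN, hIN, hRN⟩ := hle_N t ht
  exact ⟨⟨hSn, hSnN⟩, ⟨hSa, hSaN⟩, ⟨hI, hIN⟩, ⟨hR, hRN⟩, ⟨hM, hM_le t ht⟩⟩

/-- Positivity and boundedness of solutions of the vaccination-awareness model (2)
(Theorem 1 of the paper). -/
theorem positivity_and_boundedness_of_solutions
    (b beta r eta lam lamo alpha alphao omegao delta vs N sigmas p q vi tau : ℝ)
    (hb : 0 < b) (hbeta : 0 < beta) (hr : 0 < r) (heta : 0 < eta)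
    (hlam : 0 < lam) (hlamo : 0 < lamo) (halpha : 0 < alpha)
    (halphao : 0 < alphao) (homegao : 0 < omegao) (hdelta : 0 < delta)
    (hvs : 0 < vs) (hN : 0 < N)
    (hsigmas0 : 0 < sigmas) (hsigmas1 : sigmas < 1)
    (hp0 : 0 ≤ p) (hp1 : p ≤ 1) (hq : q = 1 - p)
    (hvi0 : 0 < vi) (hvib : vi < b) (htau : 0 ≤ tau)
    (Sn Sa I R M : ℝ → ℝ)
    (hSnC : ContinuousOn Sn (Ici 0)) (hSaC : ContinuousOn Sa (Ici 0))
    (hIC : ContinuousOn I (Ici 0)) (hRC : ContinuousOn R (Ici 0))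
    (hMC : ContinuousOn M (Ici (-tau)))
    (hSn' : ∀ t > (0 : ℝ), HasDerivAt Sn
      ((b - vi) * N - beta * I t * Sn t / N - eta * M (t - tau) * Sn t
        + lam * Sa t + delta * q * R t - b * Sn t) t)
    (hSa' : ∀ t > (0 : ℝ), HasDerivAt Sa
      (-(sigmas * beta * I t * Sa t / N) + eta * M (t - tau) * Sn t
        - (lam + vs + b) * Sa t + delta * p * R t) t)
    (hI' : ∀ t > (0 : ℝ), HasDerivAt I
      (beta * I t * Sn t / N + sigmas * beta * I t * Sa t / N - (r + b) * I t) t)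
    (hR' : ∀ t > (0 : ℝ), HasDerivAt R
      (r * I t + vi * N + vs * Sa t - (delta + b) * R t) t)
    (hM' : ∀ t > (0 : ℝ), HasDerivAt M
      (omegao + alphao * I t + alpha * Sa t / N - lamo * M t) t)
    (hSn0 : 0 ≤ Sn 0) (hSa0 : 0 ≤ Sa 0) (hI0 : 0 < I 0) (hR0 : 0 ≤ R 0)
    (hM0 : ∀ s, -tau ≤ s → s ≤ 0 → 0 ≤ M s)
    (hsum : Sn 0 + Sa 0 + I 0 + R 0 = N) :
    ∀ t ≥ (0 : ℝ),
      (0 ≤ Sn t ∧ Sn t ≤ N) ∧ (0 ≤ Sa t ∧ Sa t ≤ N) ∧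
      (0 ≤ I t ∧ I t ≤ N) ∧ (0 ≤ R t ∧ R t ≤ N) ∧
      (0 ≤ M t ∧ M t ≤ M 0 + (omegao + alphao * N + alpha) / lamo) :=
  positivity_and_boundedness_of_solutions_general b beta r eta lam lamo alpha alphao omegao delta vs
    N sigmas p q vi tau hbeta hr heta hlam hlamo halpha halphao homegao hdelta hvs hN hsigmas0 hp0
    hp1 hq hvi0 hvib htau Sn Sa I R M hSnC hSaC hIC hRC hMC hSn' hSa' hI' hR' hM' hSn0 hSa0 hI0 hR0
    hM0 hsum
end

section
/- Define x1 = ηα(δ + v_s + b), x2 = λ_o(δ + b)(λ + b) + λ_o v_s(δq + b) + ηω_o(δ + v_s + b) − ηα(b + δ − v_i), x3 = λ_o δ p v_i + ηω_o(b + δ − v_i), h_a = (−x2 + √(x2² + 4x1x3))/(2x1), h_n = λ_o[b − v_i + δq(1 − h_a) + λh_a]/[η(ω_o + αh_a) + λ_o(δq + b)]. Then the point E_0 = (S_n°, S_a°, I°, R°, M°) with S_n° = Nh_n, S_a° = Nh_a, I° = 0, R° = N(1 − h_n − h_a), M° = (ω_o + αh_a)/λ_o is an equilibrium of system (2); that is,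 all five right-hand sides (b − v_i)N − βI°S_n°/N − ηM°S_n° + λS_a° + δqR° − bS_n°, −σ_sβI°S_a°/N + ηM°S_n° − (λ + v_s + b)S_a° + δpR°, βI°S_n°/N + σ_sβI°S_a°/N − (r + b)I°, rI° + v_iN + v_sS_a° − (δ + b)R°, and ω_o + α_oI° + αS_a°/N − λ_oM° are equal to zero. -/
/-!
At `I = 0` the infection equation holds trivially and the awareness equation is the definition
of `M°`. Writing `M = M°`, the `S_n` equation is `h_n (η M + δ q + b) = b - v_i + δ q (1 - h_a) + λ h_a`,
which is the definition of `h_n`. Multiplied by `λ_o (η M + δ q + b)`, the `R` equation becomes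
`x₁ h_a² + x₂ h_a = x₃`, and `h_a` is the nonnegative root of that quadratic. The `S_a` equation then
follows because `S_n + S_a + I + R = N` is conserved by the flow.
-/

/-- The root of `a x² + b x = c` with the `+√` sign. -/
noncomputable def posRoot (a b c : ℝ) : ℝ := (-b + √(b ^ 2 + 4 * a * c)) / (2 * a)

theorem posRoot_nonneg {a b c : ℝ} (ha : 0 < a) (hc : 0 ≤ c) : 0 ≤ posRoot a b c := by
  have hb : b ≤ √(b ^ 2 + 4 * a * c) :=
    calc b ≤ |b| := le_abs_self b
      _ = √(b ^ 2) := (Real.sqrt_sq_eq_abs b).symm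
      _ ≤ √(b ^ 2 + 4 * a * c) := Real.sqrt_le_sqrt (by nlinarith)
  exact div_nonneg (by linarith) (by linarith)

theorem posRoot_isRoot {a b c : ℝ} (ha : a ≠ 0) (hd : 0 ≤ b ^ 2 + 4 * a * c) :
    a * posRoot a b c ^ 2 + b * posRoot a b c - c = 0 := by
  have hdisc : discrim a b (-c) = √(b ^ 2 + 4 * a * c) * √(b ^ 2 + 4 * a * c) := by
    rw [Real.mul_self_sqrt hd, discrim]
    ring
  linear_combination (quadratic_eq_zero_iff ha hdisc (posRoot a b c)).mpr (Or.inl rfl)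

theorem aware_balance_of_conserved {b vi beta eta lam vs delta p q r sigmas N Sn Sa I R M : ℝ}
    (hpq : p + q = 1) (htot : Sn + Sa + I + R = N)
    (hSn : (b - vi) * N - beta * I * Sn / N - eta * M * Sn + lam * Sa + delta * q * R - b * Sn = 0)
    (hI : beta * I * Sn / N + sigmas * beta * I * Sa / N - (r + b) * I = 0)
    (hR : r * I + vi * N + vs * Sa - (delta + b) * R = 0) :
    -(sigmas * beta * I * Sa / N) + eta * M * Sn - (lam + vs + b) * Sa + delta * p * R = 0 := by
  linear_combination -b * htot + delta * R * hpq - hSn - hI - hR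

theorem naive_balance_of_eq_div {b eta lam lamo alpha omegao delta q vi ha hn M : ℝ}
    (hlamo : lamo ≠ 0) (hD : eta * M + delta * q + b ≠ 0) (hM : lamo * M = omegao + alpha * ha)
    (hhn : hn = lamo * (b - vi + delta * q * (1 - ha) + lam * ha)
      / (eta * (omegao + alpha * ha) + lamo * (delta * q + b))) :
    hn * (eta * M + delta * q + b) = b - vi + delta * q * (1 - ha) + lam * ha := by
  rw [hhn, ← hM, show eta * (lamo * M) + lamo * (delta * q + b) = lamo * (eta * M + delta * q + b)
    by ring, mul_div_mul_left _ _ hlamo, div_mul_cancel₀ _ hD]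

theorem recovered_balance_of_quadratic {b eta lam lamo alpha omegao delta vs p q vi ha hn M : ℝ}
    (hq : q = 1 - p) (hlamo : lamo ≠ 0) (hD : eta * M + delta * q + b ≠ 0)
    (hM : lamo * M = omegao + alpha * ha)
    (hn_eq : hn * (eta * M + delta * q + b) = b - vi + delta * q * (1 - ha) + lam * ha)
    (hquad : eta * alpha * (delta + vs + b) * ha ^ 2
      + (lamo * (delta + b) * (lam + b) + lamo * vs * (delta * q + b)
        + eta * omegao * (delta + vs + b) - eta * alpha * (b + delta - vi)) * ha
      - (lamo * delta * p * vi + eta * omegao * (b + delta - vi)) = 0) :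
    vi + vs * ha - (delta + b) * (1 - hn - ha) = 0 := by
  have h : (lamo * (eta * M + delta * q + b)) * (vi + vs * ha - (delta + b) * (1 - hn - ha)) = 0 := by
    subst hq
    linear_combination hquad + (delta + b) * lamo * hn_eq
      + eta * (vi + vs * ha - (delta + b) * (1 - ha)) * hM
  exact (mul_eq_zero.mp h).resolve_left (mul_ne_zero hlamo hD)

theorem disease_free_point_is_equilibrium_general
    (b beta r eta lam lamo alpha alphao omegao delta vs N sigmas p q vi : ℝ)
    (hb : 0 < b) (heta : 0 < eta)
    (hlamo : 0 < lamo) (halpha : 0 < alpha)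
    (homegao : 0 < omegao) (hdelta : 0 < delta)
    (hvs : 0 < vs) (hN : 0 < N)
    (hp0 : 0 ≤ p) (hp1 : p ≤ 1) (hq : q = 1 - p)
    (hvi0 : 0 < vi) (hvib : vi < b)
    (x1 x2 x3 ha hn Sn0 Sa0 I0 R0 M0 : ℝ)
    (hx1 : x1 = eta * alpha * (delta + vs + b))
    (hx2 : x2 = lamo * (delta + b) * (lam + b) + lamo * vs * (delta * q + b)
      + eta * omegao * (delta + vs + b) - eta * alpha * (b + delta - vi))
    (hx3 : x3 = lamo * delta * p * vi + eta * omegao * (b + delta - vi))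
    (hha : ha = (-x2 + Real.sqrt (x2 ^ 2 + 4 * x1 * x3)) / (2 * x1))
    (hhn : hn = lamo * (b - vi + delta * q * (1 - ha) + lam * ha)
      / (eta * (omegao + alpha * ha) + lamo * (delta * q + b)))
    (hSn0 : Sn0 = N * hn) (hSa0 : Sa0 = N * ha) (hI0 : I0 = 0)
    (hR0 : R0 = N * (1 - hn - ha)) (hM0 : M0 = (omegao + alpha * ha) / lamo) :
    (b - vi) * N - beta * I0 * Sn0 / N - eta * M0 * Sn0 + lam * Sa0
      + delta * q * R0 - b * Sn0 = 0 ∧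
    -(sigmas * beta * I0 * Sa0 / N) + eta * M0 * Sn0
      - (lam + vs + b) * Sa0 + delta * p * R0 = 0 ∧
    beta * I0 * Sn0 / N + sigmas * beta * I0 * Sa0 / N - (r + b) * I0 = 0 ∧
    r * I0 + vi * N + vs * Sa0 - (delta + b) * R0 = 0 ∧
    omegao + alphao * I0 + alpha * Sa0 / N - lamo * M0 = 0 := by
  have hx1_pos : 0 < x1 := by rw [hx1]; positivity
  have hx3_nonneg : 0 ≤ x3 := by rw [hx3, show b + delta - vi = (b - vi) + delta by ring]; positivity
  have hha_nonneg : 0 ≤ ha := by rw [hha]; exact posRoot_nonneg hx1_pos hx3_nonneg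
  have hquad : x1 * ha ^ 2 + x2 * ha - x3 = 0 := by
    rw [hha]; exact posRoot_isRoot hx1_pos.ne' (by positivity)
  have hM : lamo * M0 = omegao + alpha * ha := by rw [hM0]; field_simp
  have hD : 0 < eta * M0 + delta * q + b := by
    have : 0 ≤ q := by linarith
    rw [hM0]; positivity
  have hn_eq := naive_balance_of_eq_div hlamo.ne' hD.ne' hM hhn
  subst hx1 hx2 hx3
  have hR := recovered_balance_of_quadratic hq hlamo.ne' hD.ne' hM hn_eq hquad
  subst hSn0 hSa0 hI0 hR0
  have hSn_rhs : (b - vi) * N - beta * 0 * (N * hn) / N - eta * M0 * (N * hn) + lam * (N * ha)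
      + delta * q * (N * (1 - hn - ha)) - b * (N * hn) = 0 := by
    linear_combination -N * hn_eq
  have hR_rhs : r * 0 + vi * N + vs * (N * ha) - (delta + b) * (N * (1 - hn - ha)) = 0 := by
    linear_combination N * hR
  refine ⟨hSn_rhs, aware_balance_of_conserved (by linarith) (by ring) hSn_rhs (by ring) hR_rhs,
    by ring, hR_rhs, ?_⟩
  rw [mul_div_assoc, mul_div_cancel_left₀ _ hN.ne']
  linear_combination -hM

/-- The point `E₀` is an equilibrium (the disease-free steady state) of the
vaccination-awareness system (2): all five right-hand sides vanish at `E₀`. -/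
theorem disease_free_point_is_equilibrium
    (b beta r eta lam lamo alpha alphao omegao delta vs N sigmas p q vi : ℝ)
    (hb : 0 < b) (hbeta : 0 < beta) (hr : 0 < r) (heta : 0 < eta)
    (hlam : 0 < lam) (hlamo : 0 < lamo) (halpha : 0 < alpha)
    (halphao : 0 < alphao) (homegao : 0 < omegao) (hdelta : 0 < delta)
    (hvs : 0 < vs) (hN : 0 < N)
    (hsigmas0 : 0 < sigmas) (hsigmas1 : sigmas < 1)
    (hp0 : 0 ≤ p) (hp1 : p ≤ 1) (hq : q = 1 - p)
    (hvi0 : 0 < vi) (hvib : vi < b)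
    (x1 x2 x3 ha hn Sn0 Sa0 I0 R0 M0 : ℝ)
    (hx1 : x1 = eta * alpha * (delta + vs + b))
    (hx2 : x2 = lamo * (delta + b) * (lam + b) + lamo * vs * (delta * q + b)
      + eta * omegao * (delta + vs + b) - eta * alpha * (b + delta - vi))
    (hx3 : x3 = lamo * delta * p * vi + eta * omegao * (b + delta - vi))
    (hha : ha = (-x2 + Real.sqrt (x2 ^ 2 + 4 * x1 * x3)) / (2 * x1))
    (hhn : hn = lamo * (b - vi + delta * q * (1 - ha) + lam * ha)
      / (eta * (omegao + alpha * ha) + lamo * (delta * q + b)))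
    (hSn0 : Sn0 = N * hn) (hSa0 : Sa0 = N * ha) (hI0 : I0 = 0)
    (hR0 : R0 = N * (1 - hn - ha)) (hM0 : M0 = (omegao + alpha * ha) / lamo) :
    (b - vi) * N - beta * I0 * Sn0 / N - eta * M0 * Sn0 + lam * Sa0
      + delta * q * R0 - b * Sn0 = 0 ∧
    -(sigmas * beta * I0 * Sa0 / N) + eta * M0 * Sn0
      - (lam + vs + b) * Sa0 + delta * p * R0 = 0 ∧
    beta * I0 * Sn0 / N + sigmas * beta * I0 * Sa0 / N - (r + b) * I0 = 0 ∧
    r * I0 + vi * N + vs * Sa0 - (delta + b) * R0 = 0 ∧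
    omegao + alphao * I0 + alpha * Sa0 / N - lamo * M0 = 0 :=
  disease_free_point_is_equilibrium_general b beta r eta lam lamo alpha alphao omegao delta vs N
    sigmas p q vi hb heta hlamo halpha homegao hdelta hvs hN hp0 hp1 hq hvi0 hvib x1 x2 x3 ha hn Sn0
    Sa0 I0 R0 M0 hx1 hx2 hx3 hha hhn hSn0 hSa0 hI0 hR0 hM0
end

section
/- Define x1 = ηα(δ + v_s + b), x2 = λ_o(δ + b)(λ + b) + λ_o v_s(δq + b) + ηω_o(δ + v_s + b) − ηα(b + δ − v_i), x3 = λ_o δ p v_i + ηω_o(b + δ − v_i), and h_a = (−x2 + √(x2² + 4x1x3))/(2x1). Then 0 < h_a < (b + δ − v_i)/(δ + v_s + b), i.e. the feasibility condition for the disease-free steady state is always satisfied. -/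
/-!
`h_a` is the positive root of `f(h) = x₁ h² + x₂ h - x₃` with `x₁, x₃ > 0`, so it is positive,
and it lies below any `t ≥ 0` with `f(t) > 0`. At `t = (b + δ - v_i)/(δ + v_s + b)` all terms
involving `η` cancel and `f(t)` is `λ_o/(δ + v_s + b)` times a quantity that is positive because
`δ p v_i < b (b + δ - v_i)`.
-/

lemma quadratic_posRoot_pos {a b c : ℝ} (ha : 0 < a) (hc : 0 < c) :
    0 < (-b + √(b ^ 2 + 4 * a * c)) / (2 * a) := by
  have hb : b < √(b ^ 2 + 4 * a * c) :=
    (le_abs_self b).trans_lt <| Real.lt_sqrt_of_sq_lt <| by rw [sq_abs]; nlinarith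
  exact div_pos (by linarith) (by positivity)

lemma quadratic_posRoot_lt_of_pos {a b c t : ℝ} (ha : 0 < a) (hc : 0 ≤ c) (ht : 0 ≤ t)
    (hft : 0 < a * t ^ 2 + b * t - c) :
    (-b + √(b ^ 2 + 4 * a * c)) / (2 * a) < t := by
  -- `t * (a t + b) > c ≥ 0` forces `a t + b > 0`, so `2 a t + b` is positive too
  have hlin : 0 < 2 * a * t + b := by nlinarith
  have hsq : √(b ^ 2 + 4 * a * c) ^ 2 < (2 * a * t + b) ^ 2 := by
    rw [Real.sq_sqrt (by positivity)]; nlinarith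
  have hs : √(b ^ 2 + 4 * a * c) < 2 * a * t + b :=
    (pow_lt_pow_iff_left₀ (Real.sqrt_nonneg _) hlin.le two_ne_zero).mp hsq
  rw [div_lt_iff₀ (by positivity)]
  linarith

lemma mul_mul_lt_mul_add_sub {b δ p v : ℝ} (hδ : 0 ≤ δ) (hp : p ≤ 1) (hv0 : 0 ≤ v)
    (hvb : v < b) : δ * p * v < b * (b + δ - v) := by
  have hpv : δ * p * v ≤ δ * v := by nlinarith [mul_nonneg hδ hv0]
  nlinarith [mul_pos (by linarith : 0 < b + δ) (sub_pos.mpr hvb)]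

theorem disease_free_ha_feasible_general
    (b eta lam lamo alpha omegao delta vs p q vi : ℝ)
    (heta : 0 < eta) (hlam : 0 < lam) (hlamo : 0 < lamo)
    (halpha : 0 < alpha) (homegao : 0 < omegao) (hdelta : 0 < delta)
    (hvs : 0 < vs)
    (hp0 : 0 ≤ p) (hp1 : p ≤ 1) (hq : q = 1 - p)
    (hvi0 : 0 < vi) (hvib : vi < b)
    (x1 x2 x3 ha : ℝ)
    (hx1 : x1 = eta * alpha * (delta + vs + b))
    (hx2 : x2 = lamo * (delta + b) * (lam + b) + lamo * vs * (delta * q + b)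
      + eta * omegao * (delta + vs + b) - eta * alpha * (b + delta - vi))
    (hx3 : x3 = lamo * delta * p * vi + eta * omegao * (b + delta - vi))
    (hha : ha = (-x2 + Real.sqrt (x2 ^ 2 + 4 * x1 * x3)) / (2 * x1)) :
    0 < ha ∧ ha < (b + delta - vi) / (delta + vs + b) := by
  set K := b + delta - vi
  set D := delta + vs + b
  have hK : 0 < K := by linarith
  have hD : 0 < D := by linarith
  have hx1pos : 0 < x1 := by rw [hx1]; positivity
  have hx3pos : 0 < x3 := by rw [hx3]; positivity
  have hqK : 0 ≤ delta * q * K := by rw [hq]; exact mul_nonneg (by nlinarith) hK.le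
  have hQ : 0 < (delta + b) * (lam + b) * K + vs * (delta * q + b) * K - delta * p * vi * D := by
    have := mul_mul_lt_mul_add_sub hdelta.le hp1 hvi0.le hvib
    nlinarith [mul_pos (by linarith : 0 < delta + b) (mul_pos hlam hK)]
  have hf : 0 < x1 * (K / D) ^ 2 + x2 * (K / D) - x3 := by
    have hfQ : x1 * (K / D) ^ 2 + x2 * (K / D) - x3 = lamo *
        ((delta + b) * (lam + b) * K + vs * (delta * q + b) * K - delta * p * vi * D) / D := by
      rw [hx1, hx2, hx3]; field_simp; ring
    rw [hfQ]; positivity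
  rw [hha]
  exact ⟨quadratic_posRoot_pos hx1pos hx3pos,
    quadratic_posRoot_lt_of_pos hx1pos hx3pos.le (by positivity) hf⟩

/-- Feasibility of the aware-susceptible fraction at the disease-free steady
state of model (2): `0 < h_a < (b + δ - v_i)/(δ + v_s + b)` always holds. -/
theorem disease_free_ha_feasible
    (b eta lam lamo alpha omegao delta vs p q vi : ℝ)
    (hb : 0 < b) (heta : 0 < eta) (hlam : 0 < lam) (hlamo : 0 < lamo)
    (halpha : 0 < alpha) (homegao : 0 < omegao) (hdelta : 0 < delta)
    (hvs : 0 < vs)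
    (hp0 : 0 ≤ p) (hp1 : p ≤ 1) (hq : q = 1 - p)
    (hvi0 : 0 < vi) (hvib : vi < b)
    (x1 x2 x3 ha : ℝ)
    (hx1 : x1 = eta * alpha * (delta + vs + b))
    (hx2 : x2 = lamo * (delta + b) * (lam + b) + lamo * vs * (delta * q + b)
      + eta * omegao * (delta + vs + b) - eta * alpha * (b + delta - vi))
    (hx3 : x3 = lamo * delta * p * vi + eta * omegao * (b + delta - vi))
    (hha : ha = (-x2 + Real.sqrt (x2 ^ 2 + 4 * x1 * x3)) / (2 * x1)) :
    0 < ha ∧ ha < (b + delta - vi) / (delta + vs + b) :=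
  disease_free_ha_feasible_general b eta lam lamo alpha omegao delta vs p q vi heta hlam hlamo
    halpha homegao hdelta hvs hp0 hp1 hq hvi0 hvib x1 x2 x3 ha hx1 hx2 hx3 hha
end

section
/- For ω > 0 define x1 = ηα(δ + v_s + b), x2(ω) = λ_o(δ + b)(λ + b) + λ_o v_s(δq + b) + ηω(δ + v_s + b) − ηα(b + δ − v_i), x3(ω) = λ_o δ p v_i + ηω(b + δ − v_i), and h_a(ω) = (−x2(ω) + √(x2(ω)² + 4x1x3(ω)))/(2x1). Then the function ω ↦ h_a(ω) is strictly monotonically increasing on (0, ∞): for 0 < ω_1 < ω_2 one has h_a(ω_1) < h_a(ω_2). -/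
/-!
`h_a(ω)` is the larger root of `f_ω(h) = x1 h² + x2(ω) h - x3(ω)`, and `x2`, `x3` are affine in `ω`
with slopes `η s` and `η c`, where `s = δ + v_s + b` and `c = b + δ - v_i`. Hence
`f_ω₂(h) = f_ω₁(h) + η (ω₂ - ω₁) (s h - c)`, so the root moves right as long as it lies below
`c / s`. At `h = c / s` the `ω`-terms of `f_ω` cancel, and `f_ω(c / s)` is a positive multiple of
`M c - δ p v_i s` with `M = (δ + b)(λ + b) + v_s (δ q + b)`; this is positive because `M > b s` and
`c > δ > 0`, so `h_a(ω) < c / s` for every `ω > 0`.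
-/

/-- The larger root of `a x ^ 2 + b x - c` (note the sign of `c`). -/
noncomputable def quadRoot (a b c : ℝ) : ℝ := (-b + √(b ^ 2 + 4 * a * c)) / (2 * a)

section QuadRoot

variable {a b c : ℝ}

theorem quadRoot_isRoot (ha : a ≠ 0) (hd : 0 ≤ b ^ 2 + 4 * a * c) :
    a * quadRoot a b c ^ 2 + b * quadRoot a b c - c = 0 := by
  have hs := Real.sq_sqrt hd
  unfold quadRoot
  set s := √(b ^ 2 + 4 * a * c)
  field_simp
  linear_combination hs

theorem lt_quadRoot_of_eval_neg {t : ℝ} (ha : 0 < a) (ht : a * t ^ 2 + b * t - c < 0) :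
    t < quadRoot a b c := by
  have hd : 0 ≤ b ^ 2 + 4 * a * c := by nlinarith [sq_nonneg (2 * a * t + b)]
  have hs := Real.sq_sqrt hd
  have hnn := Real.sqrt_nonneg (b ^ 2 + 4 * a * c)
  rw [quadRoot, lt_div_iff₀ (by positivity)]
  nlinarith [sq_nonneg (2 * a * t + b + √(b ^ 2 + 4 * a * c)),
    sq_nonneg (2 * a * t + b - √(b ^ 2 + 4 * a * c))]

theorem quadRoot_lt_of_eval_pos {t : ℝ} (ha : 0 < a) (hc : 0 ≤ c) (ht0 : 0 ≤ t)
    (ht : 0 < a * t ^ 2 + b * t - c) : quadRoot a b c < t := by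
  have hd : 0 ≤ b ^ 2 + 4 * a * c := by positivity
  have hs := Real.sq_sqrt hd
  have hnn := Real.sqrt_nonneg (b ^ 2 + 4 * a * c)
  -- `t` lies right of the vertex, since `c ≥ 0` puts the smaller root at or below `0`
  have hright : 0 < 2 * a * t + b := by nlinarith
  rw [quadRoot, div_lt_iff₀ (by positivity)]
  nlinarith [sq_nonneg (2 * a * t + b - √(b ^ 2 + 4 * a * c))]

end QuadRoot

theorem quadRoot_lt_quadRoot_of_affine {a B L S C ω₁ ω₂ : ℝ} (ha : 0 < a) (hS : 0 < S)
    (hC : 0 ≤ C) (hc : 0 ≤ L + ω₁ * C) (hω : ω₁ < ω₂)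
    (hthreshold : 0 < a * C ^ 2 + B * C * S - L * S ^ 2) :
    quadRoot a (B + ω₁ * S) (L + ω₁ * C) < quadRoot a (B + ω₂ * S) (L + ω₂ * C) := by
  set h := quadRoot a (B + ω₁ * S) (L + ω₁ * C)
  have hroot : a * h ^ 2 + (B + ω₁ * S) * h - (L + ω₁ * C) = 0 :=
    quadRoot_isRoot ha.ne' (by positivity)
  -- at `C / S` the `ω`-dependent terms cancel
  have h_lt : h < C / S := by
    refine quadRoot_lt_of_eval_pos ha hc (by positivity) ?_
    have heval : a * (C / S) ^ 2 + (B + ω₁ * S) * (C / S) - (L + ω₁ * C)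
        = (a * C ^ 2 + B * C * S - L * S ^ 2) / S ^ 2 := by
      field_simp
      ring
    rw [heval]
    positivity
  have hSh : S * h < C := by rwa [lt_div_iff₀ hS, mul_comm] at h_lt
  apply lt_quadRoot_of_eval_neg ha
  have hshift : a * h ^ 2 + (B + ω₂ * S) * h - (L + ω₂ * C)
      = (ω₂ - ω₁) * (S * h - C) := by linear_combination hroot
  rw [hshift]
  exact mul_neg_of_pos_of_neg (by linarith) (by linarith)

theorem awareness_threshold_lt {b lam vs p q delta vi : ℝ}
    (hb : 0 < b) (hlam : 0 < lam) (hvs : 0 < vs) (hdelta : 0 < delta)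
    (hp1 : p ≤ 1) (hq : 0 ≤ q) (hvi0 : 0 < vi) (hvib : vi < b) :
    delta * p * vi * (delta + vs + b)
      < ((delta + b) * (lam + b) + vs * (delta * q + b)) * (b + delta - vi) := by
  have hM : b * (delta + vs + b) < (delta + b) * (lam + b) + vs * (delta * q + b) := by
    nlinarith [mul_pos hlam (add_pos hdelta hb), mul_nonneg (mul_nonneg hvs.le hdelta.le) hq]
  calc delta * p * vi * (delta + vs + b)
      ≤ delta * b * (delta + vs + b) := by
        gcongr
        nlinarith
    _ = b * (delta + vs + b) * delta := by ring
    _ < ((delta + b) * (lam + b) + vs * (delta * q + b)) * (b + delta - vi) := by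
        gcongr
        linarith

/-- The aware-susceptible fraction `h_a(ω)` at the disease-free steady state of
model (2) is strictly increasing in the global awareness rate `ω` on `(0, ∞)`. -/
theorem ha_strictMono_in_global_awareness
    (b eta lam lamo alpha delta vs p q vi : ℝ)
    (hb : 0 < b) (heta : 0 < eta) (hlam : 0 < lam) (hlamo : 0 < lamo)
    (halpha : 0 < alpha) (hdelta : 0 < delta) (hvs : 0 < vs)
    (hp0 : 0 ≤ p) (hp1 : p ≤ 1) (hq : q = 1 - p)
    (hvi0 : 0 < vi) (hvib : vi < b) :
    ∀ omega1 omega2 : ℝ, 0 < omega1 → omega1 < omega2 →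
      (-(lamo * (delta + b) * (lam + b) + lamo * vs * (delta * q + b)
          + eta * omega1 * (delta + vs + b) - eta * alpha * (b + delta - vi))
        + Real.sqrt ((lamo * (delta + b) * (lam + b) + lamo * vs * (delta * q + b)
            + eta * omega1 * (delta + vs + b) - eta * alpha * (b + delta - vi)) ^ 2
          + 4 * (eta * alpha * (delta + vs + b))
            * (lamo * delta * p * vi + eta * omega1 * (b + delta - vi))))
        / (2 * (eta * alpha * (delta + vs + b)))
      <
      (-(lamo * (delta + b) * (lam + b) + lamo * vs * (delta * q + b)
          + eta * omega2 * (delta + vs + b) - eta * alpha * (b + delta - vi))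
        + Real.sqrt ((lamo * (delta + b) * (lam + b) + lamo * vs * (delta * q + b)
            + eta * omega2 * (delta + vs + b) - eta * alpha * (b + delta - vi)) ^ 2
          + 4 * (eta * alpha * (delta + vs + b))
            * (lamo * delta * p * vi + eta * omega2 * (b + delta - vi))))
        / (2 * (eta * alpha * (delta + vs + b))) := by
  intro omega1 omega2 hω1 hω12
  have hs : 0 < delta + vs + b := by positivity
  have hc : 0 < b + delta - vi := by linarith
  have hL : 0 ≤ lamo * delta * p * vi := by positivity
  have hx2_affine : ∀ ω : ℝ, lamo * (delta + b) * (lam + b) + lamo * vs * (delta * q + b)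
      + eta * ω * (delta + vs + b) - eta * alpha * (b + delta - vi)
      = (lamo * ((delta + b) * (lam + b) + vs * (delta * q + b))
          - eta * alpha * (b + delta - vi)) + ω * (eta * (delta + vs + b)) := fun _ => by ring
  have hx3_affine : ∀ ω : ℝ, lamo * delta * p * vi + eta * ω * (b + delta - vi)
      = lamo * delta * p * vi + ω * (eta * (b + delta - vi)) := fun _ => by ring
  simp only [hx2_affine, hx3_affine]
  refine quadRoot_lt_quadRoot_of_affine (by positivity) (by positivity) (by positivity)
    (by positivity) hω12 ?_
  have hkey := awareness_threshold_lt (q := q) hb hlam hvs hdelta hp1 (by linarith) hvi0 hvib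
  have hfactor : eta * alpha * (delta + vs + b) * (eta * (b + delta - vi)) ^ 2
      + (lamo * ((delta + b) * (lam + b) + vs * (delta * q + b)) - eta * alpha * (b + delta - vi))
        * (eta * (b + delta - vi)) * (eta * (delta + vs + b))
      - lamo * delta * p * vi * (eta * (delta + vs + b)) ^ 2
      = eta ^ 2 * lamo * (delta + vs + b) * (((delta + b) * (lam + b) + vs * (delta * q + b))
          * (b + delta - vi) - delta * p * vi * (delta + vs + b)) := by ring
  rw [hfactor]
  exact mul_pos (by positivity) (by linarith)
end

section
/- Define g1 = λ + b + a6, g2 = λ_o + δ + b, g3 = δ + b + v_s, g4 = δq + b + a6, x4 = g1 + g2 + v_s, x5 = g1g2 + λ_o g3 + v_s g4, x6 = λ_o[v_s g4 + g1(δ + b)], x7 = a4a7, and y5 = x5² − 2x4x6 − x7². Then y5 = (λ_o g1 + a4a7)(λ_o g1 − a4a7) + λ_o²[v_s² + (δ + b)² + 2v_s(λ + δp + b)] + [v_s g4 + g1(δ + b)]². In particular, if λ_o g1 > a4a7 then y5 > 0. -/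
/-! With `s = g₁ + (δ + b) + v_s` and `R = v_s g₄ + g₁(δ + b)` the coefficients take the shape
`x₄ = λ₀ + s`, `x₅ = λ₀ s + R`, `x₆ = λ₀ R`, and then `x₅² - 2x₄x₆ = λ₀²(s² - 2R) + R²`.
Expanding, `s² - 2R = g₁² + (δ + b)² + v_s² + 2v_s(g₁ + δ + b - g₄)` with
`g₁ + δ + b - g₄ = λ + δp + b`, and `λ₀²g₁² - x₇²` factors as a difference of squares.
When `λ₀g₁ > a₄a₇ > 0` that difference of squares is positive, and the other two
summands are nonnegative. -/

theorem sq_mul_add_sub_two_mul_add_mul_mul {R : Type*} [CommRing R] (m s r : R) :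
    (m * s + r) ^ 2 - 2 * (m + s) * (m * r) = m ^ 2 * (s ^ 2 - 2 * r) + r ^ 2 := by
  ring

theorem y5_identity_and_pos_general
    (lam b lamo delta vs a4 a6 a7 p q : ℝ)
    (hlam : 0 < lam) (hb : 0 < b) (hdelta : 0 < delta)
    (hvs : 0 < vs) (ha4 : 0 < a4) (ha7 : 0 < a7)
    (hp0 : 0 ≤ p) (hq : q = 1 - p)
    (g1 g2 g3 g4 x4 x5 x6 x7 y5 : ℝ)
    (hg1 : g1 = lam + b + a6) (hg2 : g2 = lamo + delta + b)
    (hg3 : g3 = delta + b + vs) (hg4 : g4 = delta * q + b + a6)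
    (hx4 : x4 = g1 + g2 + vs)
    (hx5 : x5 = g1 * g2 + lamo * g3 + vs * g4)
    (hx6 : x6 = lamo * (vs * g4 + g1 * (delta + b)))
    (hx7 : x7 = a4 * a7)
    (hy5 : y5 = x5 ^ 2 - 2 * x4 * x6 - x7 ^ 2) :
    y5 = (lamo * g1 + a4 * a7) * (lamo * g1 - a4 * a7)
      + lamo ^ 2 * (vs ^ 2 + (delta + b) ^ 2 + 2 * vs * (lam + delta * p + b))
      + (vs * g4 + g1 * (delta + b)) ^ 2 ∧
    (lamo * g1 > a4 * a7 → 0 < y5) := by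
  have hx4' : x4 = lamo + (g1 + (delta + b) + vs) := by rw [hx4, hg2]; ring
  have hx5' : x5 = lamo * (g1 + (delta + b) + vs) + (vs * g4 + g1 * (delta + b)) := by
    rw [hx5, hg2, hg3]; ring
  have hgap : g1 + (delta + b) - g4 = lam + delta * p + b := by rw [hg1, hg4, hq]; ring
  have hid : y5 = (lamo * g1 + a4 * a7) * (lamo * g1 - a4 * a7)
      + lamo ^ 2 * (vs ^ 2 + (delta + b) ^ 2 + 2 * vs * (lam + delta * p + b))
      + (vs * g4 + g1 * (delta + b)) ^ 2 := by
    rw [hy5, hx4', hx5', hx6, sq_mul_add_sub_two_mul_add_mul_mul, hx7]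
    linear_combination 2 * lamo ^ 2 * vs * hgap
  refine ⟨hid, fun h => ?_⟩
  have hsq : 0 < (lamo * g1 + a4 * a7) * (lamo * g1 - a4 * a7) :=
    mul_pos (by nlinarith [mul_pos ha4 ha7]) (sub_pos.2 h)
  rw [hid]
  positivity

/-- The coefficient `y₅ = x₅² - 2x₄x₆ - x₇²` of the cubic at the disease-free
steady state: identity and positivity when `λ₀g₁ > a₄a₇`. -/
theorem y5_identity_and_pos
    (lam b lamo delta vs a4 a6 a7 p q : ℝ)
    (hlam : 0 < lam) (hb : 0 < b) (hlamo : 0 < lamo) (hdelta : 0 < delta)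
    (hvs : 0 < vs) (ha4 : 0 < a4) (ha6 : 0 < a6) (ha7 : 0 < a7)
    (hp0 : 0 ≤ p) (hp1 : p ≤ 1) (hq : q = 1 - p)
    (g1 g2 g3 g4 x4 x5 x6 x7 y5 : ℝ)
    (hg1 : g1 = lam + b + a6) (hg2 : g2 = lamo + delta + b)
    (hg3 : g3 = delta + b + vs) (hg4 : g4 = delta * q + b + a6)
    (hx4 : x4 = g1 + g2 + vs)
    (hx5 : x5 = g1 * g2 + lamo * g3 + vs * g4)
    (hx6 : x6 = lamo * (vs * g4 + g1 * (delta + b)))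
    (hx7 : x7 = a4 * a7)
    (hy5 : y5 = x5 ^ 2 - 2 * x4 * x6 - x7 ^ 2) :
    y5 = (lamo * g1 + a4 * a7) * (lamo * g1 - a4 * a7)
      + lamo ^ 2 * (vs ^ 2 + (delta + b) ^ 2 + 2 * vs * (lam + delta * p + b))
      + (vs * g4 + g1 * (delta + b)) ^ 2 ∧
    (lamo * g1 > a4 * a7 → 0 < y5) :=
  y5_identity_and_pos_general lam b lamo delta vs a4 a6 a7 p q hlam hb hdelta hvs ha4 ha7 hp0 hq g1
    g2 g3 g4 x4 x5 x6 x7 y5 hg1 hg2 hg3 hg4 hx4 hx5 hx6 hx7 hy5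
end

section
/- Suppose positive real numbers S_n*, S_a*, I*, R*, M* satisfy the endemic steady-state equations of system (2): (b − v_i)N − βI*S_n*/N − ηM*S_n* + λS_a* + δqR* − bS_n* = 0; −σ_sβI*S_a*/N + ηM*S_n* − (λ + v_s + b)S_a* + δpR* = 0; βS_n*/N + σ_sβS_a*/N = r + b; rI* + v_iN + v_sS_a* − (δ + b)R* = 0; ω_o + α_oI* + αS_a*/N − λ_oM* = 0. If (Nηα_o + βλ_o)S_n* > Nλ_o(r + δp + b), then λ_o(λ + v_s + b) > ηαS_n*/N. -/
/-!
Clearing `N` from the `S_a` balance and multiplying it by `λ₀`, the awareness equation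
`λ₀M* = ω₀ + α₀I* + αS_a*/N` turns the term `ηM*S_n*` into one containing `ηαS_n*S_a*/N`:
`λ₀(λ + v_s + b)S_a*N = ηαS_n*S_a* + ηω₀NS_n* + I*(ηα₀NS_n* − λ₀σ_sβS_a*) + λ₀δpR*N`.
The force-of-infection equation `βS_n* + σ_sβS_a* = (r + b)N` rewrites the hypothesis as
`ηα₀NS_n* − λ₀σ_sβS_a* > λ₀δpN ≥ 0`, so every other term on the right is nonnegative and the
one multiplied by `I*` is positive; dividing by `S_a*N` gives the claim.
-/

theorem lamo_mul_exit_mul_eq_of_steady_state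
    {b eta lam lamo alpha alphao omegao delta vs N sigmas beta p Sn Sa I R M : ℝ} (hN : N ≠ 0)
    (e2 : -(sigmas * beta * I * Sa / N) + eta * M * Sn
      - (lam + vs + b) * Sa + delta * p * R = 0)
    (e5 : omegao + alphao * I + alpha * Sa / N - lamo * M = 0) :
    lamo * (lam + vs + b) * Sa * N
      = eta * alpha * Sn * Sa + eta * omegao * N * Sn
        + I * (eta * alphao * N * Sn - lamo * sigmas * beta * Sa) + lamo * delta * p * R * N := by
  have hM : lamo * M * N = omegao * N + alphao * I * N + alpha * Sa := by
    field_simp at e5; linear_combination -e5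
  field_simp at e2
  linear_combination (-lamo) * e2 + eta * Sn * hM

theorem lamo_mul_delta_lt_of_threshold
    {b beta r eta lamo alphao delta N sigmas p Sn Sa : ℝ} (hN : N ≠ 0)
    (e3 : beta * Sn / N + sigmas * beta * Sa / N = r + b)
    (h : (N * eta * alphao + beta * lamo) * Sn > N * lamo * (r + delta * p + b)) :
    lamo * delta * p * N < eta * alphao * N * Sn - lamo * sigmas * beta * Sa := by
  field_simp at e3
  linear_combination h + lamo * e3

theorem endemic_x7_bound_general
    (b beta r eta lam lamo alpha alphao omegao delta vs N sigmas p : ℝ)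
    (heta : 0 < eta) (hlamo : 0 < lamo) (homegao : 0 < omegao) (hdelta : 0 < delta)
    (hN : 0 < N) (hp0 : 0 ≤ p)
    (Sn Sa I R M : ℝ)
    (hSn : 0 < Sn) (hSa : 0 < Sa) (hI : 0 < I) (hR : 0 < R)
    (e2 : -(sigmas * beta * I * Sa / N) + eta * M * Sn
      - (lam + vs + b) * Sa + delta * p * R = 0)
    (e3 : beta * Sn / N + sigmas * beta * Sa / N = r + b)
    (e5 : omegao + alphao * I + alpha * Sa / N - lamo * M = 0)
    (h : (N * eta * alphao + beta * lamo) * Sn > N * lamo * (r + delta * p + b)) :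
    lamo * (lam + vs + b) > eta * alpha * Sn / N := by
  have hbalance := lamo_mul_exit_mul_eq_of_steady_state hN.ne' e2 e5
  have hgap := lamo_mul_delta_lt_of_threshold hN.ne' e3 h
  have hkey : eta * alpha * Sn * Sa < lamo * (lam + vs + b) * Sa * N := by
    have hI_term := mul_pos hI (lt_of_le_of_lt (by positivity) hgap)
    have homegao_term : 0 < eta * omegao * N * Sn := by positivity
    have hR_term : 0 ≤ lamo * delta * p * R * N := by positivity
    linarith
  rw [gt_iff_lt, div_lt_iff₀ hN]
  exact lt_of_mul_lt_mul_right (by linarith) hSa.le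

/-- At the endemic steady state of model (2), the inequality
`(Nηα₀ + βλ₀)S_n* > Nλ₀(r + δp + b)` implies `λ₀(λ + v_s + b) > ηαS_n*/N`. -/
theorem endemic_x7_bound
    (b beta r eta lam lamo alpha alphao omegao delta vs N sigmas p q vi : ℝ)
    (hb : 0 < b) (hbeta : 0 < beta) (hr : 0 < r) (heta : 0 < eta)
    (hlam : 0 < lam) (hlamo : 0 < lamo) (halpha : 0 < alpha)
    (halphao : 0 < alphao) (homegao : 0 < omegao) (hdelta : 0 < delta)
    (hvs : 0 < vs) (hN : 0 < N)
    (hsigmas0 : 0 < sigmas) (hsigmas1 : sigmas < 1)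
    (hp0 : 0 ≤ p) (hp1 : p ≤ 1) (hq : q = 1 - p)
    (hvi0 : 0 < vi) (hvib : vi < b)
    (Sn Sa I R M : ℝ)
    (hSn : 0 < Sn) (hSa : 0 < Sa) (hI : 0 < I) (hR : 0 < R) (hM : 0 < M)
    (e1 : (b - vi) * N - beta * I * Sn / N - eta * M * Sn + lam * Sa
      + delta * q * R - b * Sn = 0)
    (e2 : -(sigmas * beta * I * Sa / N) + eta * M * Sn
      - (lam + vs + b) * Sa + delta * p * R = 0)
    (e3 : beta * Sn / N + sigmas * beta * Sa / N = r + b)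
    (e4 : r * I + vi * N + vs * Sa - (delta + b) * R = 0)
    (e5 : omegao + alphao * I + alpha * Sa / N - lamo * M = 0)
    (h : (N * eta * alphao + beta * lamo) * Sn > N * lamo * (r + delta * p + b)) :
    lamo * (lam + vs + b) > eta * alpha * Sn / N :=
  endemic_x7_bound_general b beta r eta lam lamo alpha alphao omegao delta vs N sigmas p heta hlamo
    homegao hdelta hN hp0 Sn Sa I R M hSn hSa hI hR e2 e3 e5 h
end

section
/- Let a1, a2, a3, a4, a5, a6, a7 be positive real numbers with a1 > a3, and define g4 = δq + b + a6, x7 = a4a7, P4 = λ_o[a1(v_s(δq + a2) + λ(δ + b) + r(λ + a3 − δq)) + (δ + b)(a3(b + a1 + a6) + a2(a1 − a3)) + a3 r g4], and P̃4 = α_o a4[v_s a1 + (δ + b)(a1 − a3)] − x7 a1(r + δ + b). If α_o a4 + λ_o a2 > λ_o(r + δp + b) and λ_o(λ + v_s + b) > x7, then P4 + P̃4 > 0. -/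
/-! Substituting `q = 1 - p`, the sum `P₄ + P̃₄` equals
`M · (α₀a₄ + λ₀a₂ - λ₀(r + δp + b)) + a₁(r + δ + b) · (λ₀(λ + v_s + b) - x₇)
  + λ₀(r + δ + b) · (a₃(a₁ + a₆) + δp(a₁ - a₃))`
with `M = v_s a₁ + (δ + b)(a₁ - a₃)`: the two hypotheses are exactly the positivity of the
first two gaps, and every remaining factor is nonnegative because `a₁ > a₃`. -/

theorem P4_add_P4tilde_eq {R : Type*} [CommRing R]
    (lam b r lamo alphao delta vs p a1 a2 a3 a4 a6 x7 : R) :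
    lamo * (a1 * (vs * (delta * (1 - p) + a2) + lam * (delta + b)
        + r * (lam + a3 - delta * (1 - p)))
      + (delta + b) * (a3 * (b + a1 + a6) + a2 * (a1 - a3))
      + a3 * r * (delta * (1 - p) + b + a6))
    + (alphao * a4 * (vs * a1 + (delta + b) * (a1 - a3)) - x7 * a1 * (r + delta + b))
    = (vs * a1 + (delta + b) * (a1 - a3)) * (alphao * a4 + lamo * a2 - lamo * (r + delta * p + b))
      + a1 * (r + delta + b) * (lamo * (lam + vs + b) - x7)
      + lamo * (r + delta + b) * (a3 * (a1 + a6) + delta * p * (a1 - a3)) := by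
  ring

theorem P4_plus_P4tilde_pos_general
    (lam b r lamo alphao delta vs p q : ℝ)
    (hb : 0 < b) (hr : 0 < r) (hlamo : 0 < lamo)
    (hdelta : 0 < delta) (hvs : 0 < vs)
    (hp0 : 0 ≤ p) (hq : q = 1 - p)
    (a1 a2 a3 a4 a6 : ℝ)
    (ha1 : 0 < a1) (ha3 : 0 < a3)
    (ha6 : 0 < a6)
    (ha13 : a1 > a3)
    (g4 x7 P4 P4t : ℝ)
    (hg4 : g4 = delta * q + b + a6)
    (hP4 : P4 = lamo * (a1 * (vs * (delta * q + a2) + lam * (delta + b)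
        + r * (lam + a3 - delta * q))
      + (delta + b) * (a3 * (b + a1 + a6) + a2 * (a1 - a3)) + a3 * r * g4))
    (hP4t : P4t = alphao * a4 * (vs * a1 + (delta + b) * (a1 - a3))
      - x7 * a1 * (r + delta + b))
    (h1 : alphao * a4 + lamo * a2 > lamo * (r + delta * p + b))
    (h2 : lamo * (lam + vs + b) > x7) :
    P4 + P4t > 0 := by
  subst hq hg4 hP4 hP4t
  rw [P4_add_P4tilde_eq]
  have h13 := sub_pos.2 ha13
  have h1' := sub_pos.2 h1
  have h2' := sub_pos.2 h2
  positivity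

/-- The Routh–Hurwitz condition `P₄ + P̃₄ > 0` at the endemic steady state of
model (2), given `α₀a₄ + λ₀a₂ > λ₀(r + δp + b)` and `λ₀(λ + v_s + b) > x₇`. -/
theorem P4_plus_P4tilde_pos
    (lam b r lamo alphao delta vs p q : ℝ)
    (hlam : 0 < lam) (hb : 0 < b) (hr : 0 < r) (hlamo : 0 < lamo)
    (halphao : 0 < alphao) (hdelta : 0 < delta) (hvs : 0 < vs)
    (hp0 : 0 ≤ p) (hp1 : p ≤ 1) (hq : q = 1 - p)
    (a1 a2 a3 a4 a5 a6 a7 : ℝ)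
    (ha1 : 0 < a1) (ha2 : 0 < a2) (ha3 : 0 < a3) (ha4 : 0 < a4)
    (ha5 : 0 < a5) (ha6 : 0 < a6) (ha7 : 0 < a7)
    (ha13 : a1 > a3)
    (g4 x7 P4 P4t : ℝ)
    (hg4 : g4 = delta * q + b + a6)
    (hx7 : x7 = a4 * a7)
    (hP4 : P4 = lamo * (a1 * (vs * (delta * q + a2) + lam * (delta + b)
        + r * (lam + a3 - delta * q))
      + (delta + b) * (a3 * (b + a1 + a6) + a2 * (a1 - a3)) + a3 * r * g4))
    (hP4t : P4t = alphao * a4 * (vs * a1 + (delta + b) * (a1 - a3))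
      - x7 * a1 * (r + delta + b))
    (h1 : alphao * a4 + lamo * a2 > lamo * (r + delta * p + b))
    (h2 : lamo * (lam + vs + b) > x7) :
    P4 + P4t > 0 :=
  P4_plus_P4tilde_pos_general lam b r lamo alphao delta vs p q hb hr hlamo hdelta hvs hp0 hq a1 a2
    a3 a4 a6 ha1 ha3 ha6 ha13 g4 x7 P4 P4t hg4 hP4 hP4t h1 h2
end

section
/- Let P1, P2, P3, P4, P̃3, P̃4, x7 be real numbers, τ ≥ 0, and μ a real number such that k = iμ satisfies the transcendental characteristic equation k⁴ + P1k³ + P2k² + P3k + P4 = (x7k² − P̃3k − P̃4)e^{−kτ}. Then z = μ² satisfies μ⁸ + y7μ⁶ + y8μ⁴ + y9μ² + y10 = 0, where y7 = P1² − 2P2, y8 = 2P4 + P2² − 2P1P3 − x7², y9 = P3² − 2P2P4 − P̃3² − 2x7P̃4, and y10 = P4² − P̃4². -/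
/-! On the imaginary axis the factor `exp (-iμτ)` has modulus one, so taking squared moduli of
both sides eliminates the delay `τ`. Writing both sides through their real and imaginary parts,
`(μ⁴ - P2 μ² + P4)² + (P3 μ - P1 μ³)² = (x7 μ² + P̃4)² + (P̃3 μ)²`, which expands to the
degree-eight equation. -/

open Complex

lemma Complex.normSq_eq_of_eq_mul_exp_ofReal_mul_I {a b : ℂ} {θ : ℝ}
    (h : a = b * exp (θ * I)) : normSq a = normSq b := by
  rw [h, normSq_mul, normSq_eq_norm_sq (exp _), norm_exp_ofReal_mul_I, one_pow, mul_one]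

lemma quartic_eval_ofReal_mul_I (P1 P2 P3 P4 μ : ℝ) :
    ((μ : ℂ) * I) ^ 4 + (P1 : ℂ) * ((μ : ℂ) * I) ^ 3 + (P2 : ℂ) * ((μ : ℂ) * I) ^ 2
        + (P3 : ℂ) * ((μ : ℂ) * I) + (P4 : ℂ)
      = ⟨μ ^ 4 - P2 * μ ^ 2 + P4, P3 * μ - P1 * μ ^ 3⟩ := by
  apply Complex.ext <;> simp [pow_succ] <;> ring

lemma quadratic_eval_ofReal_mul_I (x7 P3t P4t μ : ℝ) :
    (x7 : ℂ) * ((μ : ℂ) * I) ^ 2 - (P3t : ℂ) * ((μ : ℂ) * I) - (P4t : ℂ)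
      = ⟨-(x7 * μ ^ 2) - P4t, -(P3t * μ)⟩ := by
  apply Complex.ext <;> simp [pow_succ]

theorem hopf_frequency_equation_general
    (P1 P2 P3 P4 P3t P4t x7 tau mu : ℝ)
    (h : ((mu : ℂ) * Complex.I) ^ 4 + (P1 : ℂ) * ((mu : ℂ) * Complex.I) ^ 3
        + (P2 : ℂ) * ((mu : ℂ) * Complex.I) ^ 2
        + (P3 : ℂ) * ((mu : ℂ) * Complex.I) + (P4 : ℂ)
      = ((x7 : ℂ) * ((mu : ℂ) * Complex.I) ^ 2
          - (P3t : ℂ) * ((mu : ℂ) * Complex.I) - (P4t : ℂ))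
        * Complex.exp (-((mu : ℂ) * Complex.I) * (tau : ℂ))) :
    mu ^ 8 + (P1 ^ 2 - 2 * P2) * mu ^ 6
      + (2 * P4 + P2 ^ 2 - 2 * P1 * P3 - x7 ^ 2) * mu ^ 4
      + (P3 ^ 2 - 2 * P2 * P4 - P3t ^ 2 - 2 * x7 * P4t) * mu ^ 2
      + (P4 ^ 2 - P4t ^ 2) = 0 := by
  have hexp : -((mu : ℂ) * I) * (tau : ℂ) = ((-(mu * tau) : ℝ) : ℂ) * I := by
    push_cast; ring
  rw [hexp] at h
  have hmod := normSq_eq_of_eq_mul_exp_ofReal_mul_I h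
  rw [quartic_eval_ofReal_mul_I, quadratic_eval_ofReal_mul_I] at hmod
  simp only [normSq_mk] at hmod
  linear_combination hmod

/-- If `k = iμ` solves the transcendental characteristic equation at the
endemic steady state of model (2), then `μ²` is a root of the degree-eight
polynomial determining the possible Hopf frequencies. -/
theorem hopf_frequency_equation
    (P1 P2 P3 P4 P3t P4t x7 tau mu : ℝ) (htau : 0 ≤ tau)
    (h : ((mu : ℂ) * Complex.I) ^ 4 + (P1 : ℂ) * ((mu : ℂ) * Complex.I) ^ 3
        + (P2 : ℂ) * ((mu : ℂ) * Complex.I) ^ 2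
        + (P3 : ℂ) * ((mu : ℂ) * Complex.I) + (P4 : ℂ)
      = ((x7 : ℂ) * ((mu : ℂ) * Complex.I) ^ 2
          - (P3t : ℂ) * ((mu : ℂ) * Complex.I) - (P4t : ℂ))
        * Complex.exp (-((mu : ℂ) * Complex.I) * (tau : ℂ))) :
    mu ^ 8 + (P1 ^ 2 - 2 * P2) * mu ^ 6
      + (2 * P4 + P2 ^ 2 - 2 * P1 * P3 - x7 ^ 2) * mu ^ 4
      + (P3 ^ 2 - 2 * P2 * P4 - P3t ^ 2 - 2 * x7 * P4t) * mu ^ 2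
      + (P4 ^ 2 - P4t ^ 2) = 0 :=
  hopf_frequency_equation_general P1 P2 P3 P4 P3t P4t x7 tau mu h
end

section
/- Let P1, P2, P3, P4, P̃3, P̃4, x7 be real numbers, τ0 ≥ 0 and μ0 > 0 be such that k0 = iμ0 satisfies the characteristic equation k⁴ + P1k³ + P2k² + P3k + P4 = (x7k² − P̃3k − P̃4)e^{−kτ0}, and suppose (x7μ0² + P̃4)² + P̃3²μ0² ≠ 0. Then the real part of the complex number [((2x7k0 − P̃3)e^{−k0τ0} − (4k0³ + 3P1k0² + 2P2k0 + P3)) / ((x7k0³ − P̃3k0² − P̃4k0)e^{−k0τ0})] − τ0/k0 equals (4μ0⁶ + 3y7μ0⁴ + 2y8μ0² + y9) / ((x7μ0² + P̃4)² + P̃3²μ0²), where y7 = P1² − 2P2, y8 = 2P4 + P2² − 2P1P3 − x7², y9 = P3² − 2P2P4 − P̃3² − 2x7P̃4. Equivalently, this real part equals z_v f′(μ0), where f(μ) = μ⁸ + y7μ⁶ + y8μ⁴ + y9μ² + y10 with y10 = P4² − P̃4², and z_v = [2μ0((x7μ0² + P̃4)² + P̃3²μ0²)]^{−1}; in particular its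 sign equals the sign of f′(μ0). -/
/-!
At `k = iμ` the characteristic equation `N(k) = M(k) e^{-kτ}` with `|e^{-iμτ}| = 1` forces
`|N(iμ)| = |M(iμ)|`, and `(dk/dτ)⁻¹ = M'/(kM) - N'/(kN) - τ/k`. Since `d/dμ p(iμ) = i p'(iμ)`,
`Re (p'/(iμ p)) = -(d/dμ |p(iμ)|²) / (2μ |p(iμ)|²)`, so the real part of `(dk/dτ)⁻¹` is
`F'(μ) / (2μ |M(iμ)|²)` with `F(μ) = |N(iμ)|² - |M(iμ)|²`; expanding, `F` is the even octic `f`.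
-/

open Complex ComplexConjugate

theorem Complex.re_div_ofReal_mul_I_mul (w z : ℂ) (μ : ℝ) :
    (w / (μ * I * z)).re = (w * conj z).im / (μ * ‖z‖ ^ 2) := by
  have h : w / (μ * I * z) = w * conj z * -I / ((μ * ‖z‖ ^ 2 : ℝ) : ℂ) := by
    rcases eq_or_ne z 0 with rfl | hz
    · simp
    have hz' : conj z ≠ 0 := by simpa using hz
    rw [ofReal_mul, ofReal_pow, ← mul_conj']
    field_simp
    rw [I_sq]
    ring
  rw [h, div_ofReal_re]
  simp

theorem HasDerivAt.norm_sq_comp_mul_I {g : ℂ → ℂ} {g' : ℂ} {μ : ℝ}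
    (hg : HasDerivAt g g' (μ * I)) :
    HasDerivAt (fun t : ℝ => ‖g (t * I)‖ ^ 2) (-2 * (g' * conj (g (μ * I))).im) μ := by
  have hI : HasDerivAt (fun z : ℂ => z * I) I μ :=
    ((hasDerivAt_id (μ : ℂ)).mul_const I).congr_deriv (one_mul I)
  have hγ : HasDerivAt (fun t : ℝ => g (t * I)) (g' * I) μ := (hg.comp (μ : ℂ) hI).comp_ofReal
  convert hγ.norm_sq using 1
  rw [Complex.inner]
  simp only [mul_re, mul_im, conj_re, conj_im, I_re, I_im]
  ring

theorem re_delay_quotient_eq_deriv_norm_sq_sub {N M : ℂ → ℂ} {N' M' : ℂ} {μ τ : ℝ}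
    (hN : HasDerivAt N N' (μ * I)) (hM : HasDerivAt M M' (μ * I))
    (hroot : N (μ * I) = M (μ * I) * exp (-(μ * I) * τ)) :
    ((M' * exp (-(μ * I) * τ) - N') / (μ * I * M (μ * I) * exp (-(μ * I) * τ))
        - τ / (μ * I)).re
      = deriv (fun t : ℝ => ‖N (t * I)‖ ^ 2 - ‖M (t * I)‖ ^ 2) μ
        / (2 * μ * ‖M (μ * I)‖ ^ 2) := by
  have hexp : ‖exp (-(μ * I) * τ)‖ = 1 := by simp [norm_exp]
  have hnorm : ‖N (μ * I)‖ = ‖M (μ * I)‖ := by rw [hroot, norm_mul, hexp, mul_one]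
  have hsplit : (M' * exp (-(μ * I) * τ) - N') / (μ * I * M (μ * I) * exp (-(μ * I) * τ))
      = M' / (μ * I * M (μ * I)) - N' / (μ * I * N (μ * I)) := by
    rw [hroot, ← mul_assoc]
    rcases eq_or_ne (μ * I * M (μ * I)) 0 with h | h
    · simp [h]
    have he : exp (-(μ * I) * τ) ≠ 0 := exp_ne_zero _
    field_simp
  have hτ : ((τ : ℂ) / (μ * I)).re = 0 := by simp [div_re]
  have hderiv : HasDerivAt (fun t : ℝ => ‖N (t * I)‖ ^ 2 - ‖M (t * I)‖ ^ 2)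
      (-2 * (N' * conj (N (μ * I))).im - -2 * (M' * conj (M (μ * I))).im) μ :=
    hN.norm_sq_comp_mul_I.sub hM.norm_sq_comp_mul_I
  rw [hderiv.deriv, sub_re, hsplit, sub_re, hτ,
    re_div_ofReal_mul_I_mul, re_div_ofReal_mul_I_mul, hnorm]
  ring

def charPoly (P1 P2 P3 P4 : ℝ) (k : ℂ) : ℂ := k ^ 4 + P1 * k ^ 3 + P2 * k ^ 2 + P3 * k + P4

def delayPoly (x7 P3t P4t : ℝ) (k : ℂ) : ℂ := x7 * k ^ 2 - P3t * k - P4t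

theorem hasDerivAt_charPoly (P1 P2 P3 P4 : ℝ) (k : ℂ) :
    HasDerivAt (charPoly P1 P2 P3 P4)
      (4 * k ^ 3 + 3 * (P1 : ℂ) * k ^ 2 + 2 * (P2 : ℂ) * k + (P3 : ℂ)) k := by
  have h := (((((hasDerivAt_pow 4 k).add ((hasDerivAt_pow 3 k).const_mul (P1 : ℂ))).add
    ((hasDerivAt_pow 2 k).const_mul (P2 : ℂ))).add ((hasDerivAt_id k).const_mul (P3 : ℂ))).add_const
    (P4 : ℂ))
  exact h.congr_deriv (by push_cast; ring)

theorem hasDerivAt_delayPoly (x7 P3t P4t : ℝ) (k : ℂ) :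
    HasDerivAt (delayPoly x7 P3t P4t) (2 * (x7 : ℂ) * k - (P3t : ℂ)) k := by
  have h := (((hasDerivAt_pow 2 k).const_mul (x7 : ℂ)).sub
    ((hasDerivAt_id k).const_mul (P3t : ℂ))).sub_const (P4t : ℂ)
  exact h.congr_deriv (by push_cast; ring)

theorem norm_sq_charPoly_mul_I (P1 P2 P3 P4 t : ℝ) :
    ‖charPoly P1 P2 P3 P4 (t * I)‖ ^ 2
      = (t ^ 4 - P2 * t ^ 2 + P4) ^ 2 + (P3 * t - P1 * t ^ 3) ^ 2 := by
  rw [Complex.sq_norm, normSq_apply]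
  simp only [charPoly, pow_succ, pow_zero, add_re, add_im, mul_re, mul_im, ofReal_re, ofReal_im,
    I_re, I_im, one_re, one_im]
  ring

theorem norm_sq_delayPoly_mul_I (x7 P3t P4t t : ℝ) :
    ‖delayPoly x7 P3t P4t (t * I)‖ ^ 2 = (x7 * t ^ 2 + P4t) ^ 2 + P3t ^ 2 * t ^ 2 := by
  rw [Complex.sq_norm, normSq_apply]
  simp only [delayPoly, pow_succ, pow_zero, sub_re, sub_im, mul_re, mul_im, ofReal_re, ofReal_im,
    I_re, I_im, one_re, one_im]
  ring

theorem deriv_even_octic (a b c d x : ℝ) :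
    deriv (fun t : ℝ => t ^ 8 + a * t ^ 6 + b * t ^ 4 + c * t ^ 2 + d) x
      = 2 * x * (4 * x ^ 6 + 3 * a * x ^ 4 + 2 * b * x ^ 2 + c) := by
  have h := ((((hasDerivAt_pow 8 x).add ((hasDerivAt_pow 6 x).const_mul a)).add
    ((hasDerivAt_pow 4 x).const_mul b)).add ((hasDerivAt_pow 2 x).const_mul c)).add_const d
  exact h.deriv.trans (by push_cast; ring)

theorem Real.sign_mul_of_pos {c : ℝ} (hc : 0 < c) (x : ℝ) : Real.sign (c * x) = Real.sign x := by
  rcases lt_trichotomy x 0 with hx | rfl | hx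
  · rw [Real.sign_of_neg hx, Real.sign_of_neg (mul_neg_of_pos_of_neg hc hx)]
  · rw [mul_zero]
  · rw [Real.sign_of_pos hx, Real.sign_of_pos (mul_pos hc hx)]

theorem hopf_transversality_general
    (P1 P2 P3 P4 P3t P4t x7 tau0 mu0 : ℝ)
    (hmu0 : 0 < mu0)
    (k0 : ℂ) (hk0 : k0 = (mu0 : ℂ) * Complex.I)
    (hchar : k0 ^ 4 + (P1 : ℂ) * k0 ^ 3 + (P2 : ℂ) * k0 ^ 2
        + (P3 : ℂ) * k0 + (P4 : ℂ)
      = ((x7 : ℂ) * k0 ^ 2 - (P3t : ℂ) * k0 - (P4t : ℂ))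
        * Complex.exp (-k0 * (tau0 : ℂ)))
    (hden : (x7 * mu0 ^ 2 + P4t) ^ 2 + P3t ^ 2 * mu0 ^ 2 ≠ 0)
    (y7 y8 y9 y10 zv : ℝ)
    (hy7 : y7 = P1 ^ 2 - 2 * P2)
    (hy8 : y8 = 2 * P4 + P2 ^ 2 - 2 * P1 * P3 - x7 ^ 2)
    (hy9 : y9 = P3 ^ 2 - 2 * P2 * P4 - P3t ^ 2 - 2 * x7 * P4t)
    (hy10 : y10 = P4 ^ 2 - P4t ^ 2)
    (hzv : zv = (2 * mu0 * ((x7 * mu0 ^ 2 + P4t) ^ 2 + P3t ^ 2 * mu0 ^ 2))⁻¹)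
    (E : ℂ)
    (hE : E = ((2 * (x7 : ℂ) * k0 - (P3t : ℂ)) * Complex.exp (-k0 * (tau0 : ℂ))
          - (4 * k0 ^ 3 + 3 * (P1 : ℂ) * k0 ^ 2 + 2 * (P2 : ℂ) * k0 + (P3 : ℂ)))
        / (((x7 : ℂ) * k0 ^ 3 - (P3t : ℂ) * k0 ^ 2 - (P4t : ℂ) * k0)
            * Complex.exp (-k0 * (tau0 : ℂ)))
        - (tau0 : ℂ) / k0) :
    E.re = (4 * mu0 ^ 6 + 3 * y7 * mu0 ^ 4 + 2 * y8 * mu0 ^ 2 + y9)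
        / ((x7 * mu0 ^ 2 + P4t) ^ 2 + P3t ^ 2 * mu0 ^ 2) ∧
    E.re = zv * deriv (fun mu : ℝ =>
        mu ^ 8 + y7 * mu ^ 6 + y8 * mu ^ 4 + y9 * mu ^ 2 + y10) mu0 ∧
    Real.sign E.re = Real.sign (deriv (fun mu : ℝ =>
        mu ^ 8 + y7 * mu ^ 6 + y8 * mu ^ 4 + y9 * mu ^ 2 + y10) mu0) := by
  have hden_eq : (x7 : ℂ) * k0 ^ 3 - (P3t : ℂ) * k0 ^ 2 - (P4t : ℂ) * k0
      = k0 * delayPoly x7 P3t P4t k0 := by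
    rw [delayPoly]
    ring
  rw [hden_eq] at hE
  subst hk0
  have hf : (fun t : ℝ => ‖charPoly P1 P2 P3 P4 (t * I)‖ ^ 2 - ‖delayPoly x7 P3t P4t (t * I)‖ ^ 2)
      = fun mu : ℝ => mu ^ 8 + y7 * mu ^ 6 + y8 * mu ^ 4 + y9 * mu ^ 2 + y10 := by
    funext t
    rw [norm_sq_charPoly_mul_I, norm_sq_delayPoly_mul_I, hy7, hy8, hy9, hy10]
    ring
  have hre := re_delay_quotient_eq_deriv_norm_sq_sub (hasDerivAt_charPoly P1 P2 P3 P4 _)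
    (hasDerivAt_delayPoly x7 P3t P4t _) hchar
  rw [hf, norm_sq_delayPoly_mul_I, ← hE] at hre
  have hD : 0 < (x7 * mu0 ^ 2 + P4t) ^ 2 + P3t ^ 2 * mu0 ^ 2 :=
    lt_of_le_of_ne (by positivity) (Ne.symm hden)
  have hzv_eq : E.re = zv * deriv (fun mu : ℝ =>
      mu ^ 8 + y7 * mu ^ 6 + y8 * mu ^ 4 + y9 * mu ^ 2 + y10) mu0 := by
    rw [hre, hzv, div_eq_inv_mul]
  refine ⟨?_, hzv_eq, ?_⟩
  · rw [hre, deriv_even_octic, mul_div_mul_left _ _ (by positivity)]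
  · rw [hzv_eq, Real.sign_mul_of_pos (by rw [hzv]; positivity)]

/-- Transversality condition at a candidate Hopf point `(τ₀, iμ₀)` of the
characteristic equation at the endemic steady state of model (2): the real part
of `(dk/dτ)⁻¹` equals `z_v f′(μ₀)`, hence has the sign of `f′(μ₀)`. -/
theorem hopf_transversality
    (P1 P2 P3 P4 P3t P4t x7 tau0 mu0 : ℝ)
    (htau0 : 0 ≤ tau0) (hmu0 : 0 < mu0)
    (k0 : ℂ) (hk0 : k0 = (mu0 : ℂ) * Complex.I)
    (hchar : k0 ^ 4 + (P1 : ℂ) * k0 ^ 3 + (P2 : ℂ) * k0 ^ 2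
        + (P3 : ℂ) * k0 + (P4 : ℂ)
      = ((x7 : ℂ) * k0 ^ 2 - (P3t : ℂ) * k0 - (P4t : ℂ))
        * Complex.exp (-k0 * (tau0 : ℂ)))
    (hden : (x7 * mu0 ^ 2 + P4t) ^ 2 + P3t ^ 2 * mu0 ^ 2 ≠ 0)
    (y7 y8 y9 y10 zv : ℝ)
    (hy7 : y7 = P1 ^ 2 - 2 * P2)
    (hy8 : y8 = 2 * P4 + P2 ^ 2 - 2 * P1 * P3 - x7 ^ 2)
    (hy9 : y9 = P3 ^ 2 - 2 * P2 * P4 - P3t ^ 2 - 2 * x7 * P4t)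
    (hy10 : y10 = P4 ^ 2 - P4t ^ 2)
    (hzv : zv = (2 * mu0 * ((x7 * mu0 ^ 2 + P4t) ^ 2 + P3t ^ 2 * mu0 ^ 2))⁻¹)
    (E : ℂ)
    (hE : E = ((2 * (x7 : ℂ) * k0 - (P3t : ℂ)) * Complex.exp (-k0 * (tau0 : ℂ))
          - (4 * k0 ^ 3 + 3 * (P1 : ℂ) * k0 ^ 2 + 2 * (P2 : ℂ) * k0 + (P3 : ℂ)))
        / (((x7 : ℂ) * k0 ^ 3 - (P3t : ℂ) * k0 ^ 2 - (P4t : ℂ) * k0)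
            * Complex.exp (-k0 * (tau0 : ℂ)))
        - (tau0 : ℂ) / k0) :
    E.re = (4 * mu0 ^ 6 + 3 * y7 * mu0 ^ 4 + 2 * y8 * mu0 ^ 2 + y9)
        / ((x7 * mu0 ^ 2 + P4t) ^ 2 + P3t ^ 2 * mu0 ^ 2) ∧
    E.re = zv * deriv (fun mu : ℝ =>
        mu ^ 8 + y7 * mu ^ 6 + y8 * mu ^ 4 + y9 * mu ^ 2 + y10) mu0 ∧
    Real.sign E.re = Real.sign (deriv (fun mu : ℝ =>
        mu ^ 8 + y7 * mu ^ 6 + y8 * mu ^ 4 + y9 * mu ^ 2 + y10) mu0) :=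
  hopf_transversality_general P1 P2 P3 P4 P3t P4t x7 tau0 mu0 hmu0 k0 hk0 hchar hden y7 y8 y9 y10 zv
    hy7 hy8 hy9 hy10 hzv E hE
end
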